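/- arXiv:1302.0828 — 8 statements merged into one kernel-verified Lean document; each statement's English description precedes it below -/
import Mathlib

section
/- Let ≺ be a strict linear order on ℕ that is not stable-ish, i.e., there is no set V ⊆ ℕ that is nonempty, downward closed under ≺, has no ≺-maximum element, and whose complement is nonempty and has no ≺-minimum element. Then there is a function f : ℕ → ℕ, computable relative to (the characteristic function of the code of) ≺, that is either an infinite ascending sequence or an infinite descending sequence for ≺. -/
/-- Partial functions on `ℕ` that are recursive in an oracle `O : ℕ → ℕ`
(the relativization of `Nat.Partrec`). -/
inductive OracleRecursiveIn (O : ℕ → ℕ) : (ℕ →. ℕ) → Prop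
  | zero : OracleRecursiveIn O (pure 0)
  | succ : OracleRecursiveIn O ↑Nat.succ
  | left : OracleRecursiveIn O ↑fun n : ℕ => n.unpair.1
  | right : OracleRecursiveIn O ↑fun n : ℕ => n.unpair.2
  | oracle : OracleRecursiveIn O ↑O
  | pair {f g} : OracleRecursiveIn O f → OracleRecursiveIn O g →
      OracleRecursiveIn O fun n => Nat.pair <$> f n <*> g n
  | comp {f g} : OracleRecursiveIn O f → OracleRecursiveIn O g →
      OracleRecursiveIn O fun n => g n >>= f
  | prec {f g} : OracleRecursiveIn O f → OracleRecursiveIn O g →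
      OracleRecursiveIn O (Nat.unpaired fun a n =>
        n.rec (f a) fun y IH => do let i ← IH; g (Nat.pair a (Nat.pair y i)))
  | rfind {f} : OracleRecursiveIn O f →
      OracleRecursiveIn O fun a => Nat.rfind fun n => (fun m => m = 0) <$> f (Nat.pair a n)

/-- The characteristic function of a set of naturals. -/
noncomputable def charFun (A : Set ℕ) : ℕ → ℕ := A.indicator fun _ => 1

/-- `A` is Turing reducible to `B`. -/
def TuringRed (A B : Set ℕ) : Prop := OracleRecursiveIn (charFun B) ↑(charFun A)

/-- The recursive join `A ⊕ B` of two sets of naturals. -/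
def setJoin (A B : Set ℕ) : Set ℕ :=
  {n | (∃ m ∈ A, n = 2 * m) ∨ (∃ m ∈ B, n = 2 * m + 1)}

/-- A Turing ideal: a nonempty collection of subsets of `ℕ` closed under join and
closed downward under Turing reducibility. -/
def IsTuringIdeal (I : Set (Set ℕ)) : Prop :=
  I.Nonempty ∧ (∀ A ∈ I, ∀ B ∈ I, setJoin A B ∈ I) ∧
    ∀ A B : Set ℕ, TuringRed A B → B ∈ I → A ∈ I

/-- The code of a binary relation on `ℕ` as a set of naturals. -/
def codeRel (R : ℕ → ℕ → Prop) : Set ℕ := {n | ∃ x y, R x y ∧ n = Nat.pair x y}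

/-- The code of a function `ℕ → ℕ` (its graph) as a set of naturals. -/
def codeFun (f : ℕ → ℕ) : Set ℕ := {n | ∃ k, n = Nat.pair k (f k)}

/-- A strict linear order `≺` on ℕ is stable-ish if there is a nonempty initial
segment `V` with no `≺`-maximum whose complement is nonempty with no `≺`-minimum. -/
def StableIsh (prec : ℕ → ℕ → Prop) : Prop :=
  ∃ V : Set ℕ, V.Nonempty ∧ (∀ x y, prec x y → y ∈ V → x ∈ V) ∧
    (∀ x ∈ V, ∃ y ∈ V, prec x y) ∧
    Vᶜ.Nonempty ∧ (∀ x ∈ Vᶜ, ∃ y ∈ Vᶜ, prec y x)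


/-!
If `≺` has no maximum, the greedy sequence "next term = least `y` with current `≺ y`" is
computable from `≺` and ascends; dually if `≺` has no minimum. Otherwise the set `W` of elements
with infinitely many `≺`-successors is a nonempty proper initial segment, so, `≺` not being
stable-ish, either `W` has a maximum `w` or its complement has a minimum `g`. Between `a ∈ W` and
`b ∉ W` with `a ≺ b` there is always a further element, since otherwise the infinitely many
successors of `a` would be `b` and the finitely many successors of `b`. Hence the greedy search
ascends forever below `g`, or descends forever above `w`; membership in either interval is a single
oracle query.
-/

theorem mem_codeRel {r : ℕ → ℕ → Prop} {n : ℕ} : n ∈ codeRel r ↔ r n.unpair.1 n.unpair.2 := by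
  constructor
  · rintro ⟨x, y, hxy, rfl⟩
    simpa using hxy
  · intro h
    exact ⟨_, _, h, (Nat.pair_unpair n).symm⟩

namespace OracleRecursiveIn

variable {O : ℕ → ℕ} {r : ℕ → ℕ → Prop}

theorem of_eq {f g : ℕ →. ℕ} (hf : OracleRecursiveIn O f) (H : ∀ n, f n = g n) :
    OracleRecursiveIn O g :=
  funext H ▸ hf

theorem of_partrec {f : ℕ →. ℕ} (h : Nat.Partrec f) : OracleRecursiveIn O f := by
  induction h with
  | zero => exact zero
  | succ => exact succ
  | left => exact left
  | right => exact right
  | pair _ _ ih₁ ih₂ => exact pair ih₁ ih₂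
  | comp _ _ ih₁ ih₂ => exact comp ih₁ ih₂
  | prec _ _ ih₁ ih₂ => exact prec ih₁ ih₂
  | rfind _ ih => exact rfind ih

theorem of_primrec {f : ℕ → ℕ} (h : Primrec f) : OracleRecursiveIn O f :=
  of_partrec (Nat.Partrec.of_primrec (Primrec.nat_iff.1 h))

theorem comp_total {f g : ℕ → ℕ} (hf : OracleRecursiveIn O f) (hg : OracleRecursiveIn O g) :
    OracleRecursiveIn O ↑(f ∘ g) :=
  (comp hf hg).of_eq fun n => Part.bind_some (g n) (f : ℕ →. ℕ)

theorem pair_total {f g : ℕ → ℕ} (hf : OracleRecursiveIn O f) (hg : OracleRecursiveIn O g) :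
    OracleRecursiveIn O ↑(fun n => Nat.pair (f n) (g n)) :=
  (pair hf hg).of_eq fun n => by simp [PFun.coe_val, Seq.seq]

theorem comp₂_total {h : ℕ → ℕ → ℕ} {f g : ℕ → ℕ} (hh : Primrec₂ h)
    (hf : OracleRecursiveIn O f) (hg : OracleRecursiveIn O g) :
    OracleRecursiveIn O ↑(fun n => h (f n) (g n)) :=
  (comp_total (of_primrec (Primrec₂.unpaired.2 hh)) (pair_total hf hg)).of_eq fun n => by simp

theorem charFun_univ : OracleRecursiveIn O (charFun Set.univ) :=
  (of_primrec (Primrec.const 1)).of_eq fun n => by simp [charFun]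

theorem charFun_preimage {A : Set ℕ} {g : ℕ → ℕ} (hA : OracleRecursiveIn O (charFun A))
    (hg : Primrec g) : OracleRecursiveIn O (charFun (g ⁻¹' A)) :=
  (comp_total hA (of_primrec hg)).of_eq fun _ => rfl

theorem charFun_compl {A : Set ℕ} (hA : OracleRecursiveIn O (charFun A)) :
    OracleRecursiveIn O (charFun Aᶜ) :=
  (comp₂_total Primrec.nat_sub (of_primrec (Primrec.const 1)) hA).of_eq fun n => by
    by_cases h : n ∈ A <;> simp [charFun, h]

theorem charFun_inter {A B : Set ℕ} (hA : OracleRecursiveIn O (charFun A))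
    (hB : OracleRecursiveIn O (charFun B)) : OracleRecursiveIn O (charFun (A ∩ B)) :=
  (comp₂_total Primrec.nat_mul hA hB).of_eq fun n => by
    by_cases h : n ∈ A <;> by_cases h' : n ∈ B <;> simp [charFun, h, h']

theorem exists_choice (hr : OracleRecursiveIn O (charFun (codeRel r)))
    (htot : ∀ x, ∃ y, r x y) : ∃ s : ℕ → ℕ, OracleRecursiveIn O s ∧ ∀ x, r x (s x) := by
  classical
  refine ⟨fun x => Nat.find (htot x), (rfind (charFun_compl hr)).of_eq fun x => ?_,
    fun x => Nat.find_spec (htot x)⟩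
  refine Part.eq_some_iff.2 (Nat.mem_rfind.2 ⟨?_, fun hm => ?_⟩)
  · simp [PFun.coe_val, charFun, mem_codeRel, Nat.find_spec (htot x)]
  · simp [PFun.coe_val, charFun, mem_codeRel, Nat.find_min (htot x) hm]

theorem iterate {s : ℕ → ℕ} (hs : OracleRecursiveIn O s) (a : ℕ) :
    OracleRecursiveIn O ↑(fun n => s^[n] a) := by
  have hstep : OracleRecursiveIn O ↑(s ∘ fun p : ℕ => p.unpair.2.unpair.2) :=
    comp_total hs (of_primrec
      (Primrec.snd.comp (Primrec.unpair.comp (Primrec.snd.comp Primrec.unpair))))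
  refine (comp (prec (of_primrec (Primrec.const a)) hstep)
    (of_primrec (Primrec₂.natPair.comp (Primrec.const 0) Primrec.id))).of_eq fun n => ?_
  simp only [PFun.coe_val, Part.bind_eq_bind, Part.bind_some, id, Nat.unpaired, Nat.unpair_pair,
    Function.comp_apply]
  induction n with
  | zero => rfl
  | succ n ih =>
    rw [Function.iterate_succ_apply', ← Part.bind_some (s^[n] a) (fun i => Part.some (s i)), ← ih]

theorem charFun_codeRel_swap (hr : OracleRecursiveIn O (charFun (codeRel r))) :
    OracleRecursiveIn O (charFun (codeRel (Function.swap r))) := by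
  have hswap :
      codeRel (Function.swap r) = (fun n => Nat.pair n.unpair.2 n.unpair.1) ⁻¹' codeRel r := by
    ext n
    simp [mem_codeRel, Function.swap]
  exact hswap ▸ charFun_preimage hr
    (Primrec₂.natPair.comp (Primrec.snd.comp Primrec.unpair) (Primrec.fst.comp Primrec.unpair))

theorem charFun_setOf_rel_left (hr : OracleRecursiveIn O (charFun (codeRel r))) (g : ℕ) :
    OracleRecursiveIn O (charFun {x | r x g}) := by
  have hset : {x | r x g} = (fun x => Nat.pair x g) ⁻¹' codeRel r := by
    ext x
    simp [mem_codeRel]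
  exact hset ▸ charFun_preimage hr (Primrec₂.natPair.comp Primrec.id (Primrec.const g))

theorem charFun_setOf_rel_right (hr : OracleRecursiveIn O (charFun (codeRel r))) (g : ℕ) :
    OracleRecursiveIn O (charFun {x | r g x}) :=
  charFun_setOf_rel_left (charFun_codeRel_swap hr) g

end OracleRecursiveIn

theorem exists_oracleRecursiveIn_chain {O : ℕ → ℕ} {r : ℕ → ℕ → Prop} [IsTrans ℕ r]
    (hr : OracleRecursiveIn O (charFun (codeRel r))) {S : Set ℕ}
    (hS : OracleRecursiveIn O (charFun S)) (hne : S.Nonempty)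
    (hnoMax : ∀ x ∈ S, ∃ y ∈ S, r x y) :
    ∃ f : ℕ → ℕ, OracleRecursiveIn O f ∧ ∀ n m, n < m → r (f n) (f m) := by
  obtain ⟨a, ha⟩ := hne
  set step : ℕ → ℕ → Prop := fun x y => x ∈ S → y ∈ S ∧ r x y
  have hstepCode : codeRel step =
      ((fun n => n.unpair.1) ⁻¹' S ∩ ((fun n => n.unpair.2) ⁻¹' S ∩ codeRel r)ᶜ)ᶜ := by
    ext n
    simp only [step, mem_codeRel, Set.mem_compl_iff, Set.mem_inter_iff, Set.mem_preimage]
    tauto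
  have hstepRec : OracleRecursiveIn O (charFun (codeRel step)) := by
    rw [hstepCode]
    refine .charFun_compl (.charFun_inter ?_ (.charFun_compl (.charFun_inter ?_ hr)))
    · exact OracleRecursiveIn.charFun_preimage hS (Primrec.fst.comp Primrec.unpair)
    · exact OracleRecursiveIn.charFun_preimage hS (Primrec.snd.comp Primrec.unpair)
  have htot : ∀ x, ∃ y, step x y := fun x => by
    by_cases hx : x ∈ S
    · obtain ⟨y, hy, hxy⟩ := hnoMax x hx
      exact ⟨y, fun _ => ⟨hy, hxy⟩⟩
    · exact ⟨x, fun h => absurd h hx⟩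
  obtain ⟨s, hs, hsStep⟩ := OracleRecursiveIn.exists_choice hstepRec htot
  have hmem : ∀ n, s^[n] a ∈ S := fun n => by
    induction n with
    | zero => exact ha
    | succ n ih => exact Function.iterate_succ_apply' s n a ▸ (hsStep _ ih).1
  refine ⟨fun n => s^[n] a, hs.iterate a, fun n m hnm => ?_⟩
  refine Nat.rel_of_forall_rel_succ_of_le_of_lt r (f := fun n => s^[n] a) (fun k _ => ?_)
    n.zero_le hnm
  exact Function.iterate_succ_apply' s k a ▸ (hsStep _ (hmem k)).2

theorem exists_between_of_infinite_of_finite {α : Type*} {r : α → α → Prop}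
    [Std.Trichotomous r] {a b : α} (hab : r a b) (ha : {y | r a y}.Infinite)
    (hb : {y | r b y}.Finite) : ∃ y, r a y ∧ r y b := by
  by_contra! hgap
  refine ha ((hb.insert b).subset fun y hy => ?_)
  rcases trichotomous_of r y b with hyb | rfl | hby
  · exact absurd hyb (hgap y hy)
  · exact Set.mem_insert _ _
  · exact Set.mem_insert_of_mem _ hby

theorem infinite_setOf_rel_of_forall_not_rel {α : Type*} [Infinite α] {r : α → α → Prop}
    [Std.Trichotomous r] {m : α} (hm : ∀ y, ¬ r y m) : {y | r m y}.Infinite :=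
  (Set.finite_singleton m).infinite_compl.mono fun y (hy : y ≠ m) => by
    rcases trichotomous_of r m y with hmy | rfl | hym
    · exact hmy
    · exact absurd rfl hy
    · exact absurd hym (hm y)

theorem exists_noMax_or_noMin_of_cut {r : ℕ → ℕ → Prop} [Std.Trichotomous r]
    (h : ¬ StableIsh r) {W : Set ℕ} (hW : W.Nonempty) (hWc : Wᶜ.Nonempty)
    (hdown : ∀ x y, r x y → y ∈ W → x ∈ W)
    (hgap : ∀ a ∈ W, ∀ b ∉ W, r a b → ∃ y, r a y ∧ r y b) :
    (∃ g, {x | r x g}.Nonempty ∧ ∀ x, r x g → ∃ y, r y g ∧ r x y) ∨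
      ∃ g, {x | r g x}.Nonempty ∧ ∀ x, r g x → ∃ y, r g y ∧ r y x := by
  have hlt : ∀ a ∈ W, ∀ b ∉ W, r a b := fun a ha b hb => by
    rcases trichotomous_of r a b with hab | rfl | hba
    · exact hab
    · exact absurd ha hb
    · exact absurd (hdown b a hba ha) hb
  by_cases hnoMax : ∀ x ∈ W, ∃ y ∈ W, r x y
  · have hmin : ∃ g ∈ Wᶜ, ∀ x ∈ Wᶜ, ¬ r x g := by
      by_contra! hnoMin
      exact h ⟨W, hW, hdown, hnoMax, hWc, hnoMin⟩
    obtain ⟨g, hg, hgmin⟩ := hmin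
    refine Or.inl ⟨g, hW.imp fun a ha => hlt a ha g hg, fun x hxg => ?_⟩
    have hx : x ∈ W := by_contra fun hx => hgmin x hx hxg
    obtain ⟨y, hxy, hyg⟩ := hgap x hx g hg hxg
    exact ⟨y, hyg, hxy⟩
  · push Not at hnoMax
    obtain ⟨w, hw, hwmax⟩ := hnoMax
    exact Or.inr ⟨w, hWc.imp fun b hb => hlt w hw b hb,
      fun x hwx => hgap w hw x (fun hx => hwmax x hx hwx) hwx⟩

theorem exists_noMax_or_noMin_of_not_stableIsh {r : ℕ → ℕ → Prop} [IsStrictTotalOrder ℕ r]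
    (h : ¬ StableIsh r) (P : Set (Set ℕ)) (huniv : Set.univ ∈ P) (hlt : ∀ g, {x | r x g} ∈ P)
    (hgt : ∀ g, {x | r g x} ∈ P) :
    ∃ S ∈ P, S.Nonempty ∧ ((∀ x ∈ S, ∃ y ∈ S, r x y) ∨ ∀ x ∈ S, ∃ y ∈ S, r y x) := by
  by_cases hsucc : ∀ x, ∃ y, r x y
  · exact ⟨_, huniv, Set.univ_nonempty, Or.inl fun x _ => (hsucc x).imp fun _ hy => ⟨trivial, hy⟩⟩
  by_cases hpred : ∀ x, ∃ y, r y x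
  · exact ⟨_, huniv, Set.univ_nonempty, Or.inr fun x _ => (hpred x).imp fun _ hy => ⟨trivial, hy⟩⟩
  push Not at hsucc hpred
  obtain ⟨M, hM⟩ := hsucc
  obtain ⟨m, hm⟩ := hpred
  rcases exists_noMax_or_noMin_of_cut h (W := {x | {y | r x y}.Infinite})
    ⟨m, infinite_setOf_rel_of_forall_not_rel hm⟩ ⟨M, by simp [hM]⟩
    (fun x y hxy hy => hy.mono fun z hz => trans_of r hxy hz)
    (fun a ha b hb hab => exists_between_of_infinite_of_finite hab ha (Set.not_infinite.1 hb))
    with ⟨g, hne, hg⟩ | ⟨g, hne, hg⟩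
  · exact ⟨_, hlt g, hne, Or.inl hg⟩
  · exact ⟨_, hgt g, hne, Or.inr hg⟩

/-- If a strict linear order on ℕ is not stable-ish, then it computes a solution to
itself: there is a function, recursive in the characteristic function of the code of
the order, which is an infinite ascending or descending sequence. -/
theorem not_stableIsh_computes_solution (prec : ℕ → ℕ → Prop)
    (hlin : IsStrictTotalOrder ℕ prec) (h : ¬ StableIsh prec) :
    ∃ f : ℕ → ℕ, OracleRecursiveIn (charFun (codeRel prec)) ↑f ∧
      ((∀ n m, n < m → prec (f n) (f m)) ∨ (∀ n m, n < m → prec (f m) (f n))) := by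
  have := hlin
  have hprec : OracleRecursiveIn (charFun (codeRel prec)) (charFun (codeRel prec)) := .oracle
  obtain ⟨S, hS, hne, hnoMax | hnoMin⟩ := exists_noMax_or_noMin_of_not_stableIsh h
    {S | OracleRecursiveIn (charFun (codeRel prec)) (charFun S)} .charFun_univ
    hprec.charFun_setOf_rel_left hprec.charFun_setOf_rel_right
  · obtain ⟨f, hf, hasc⟩ := exists_oracleRecursiveIn_chain hprec hS hne hnoMax
    exact ⟨f, hf, Or.inl hasc⟩
  · obtain ⟨f, hf, hdesc⟩ :=
      exists_oracleRecursiveIn_chain hprec.charFun_codeRel_swap hS hne hnoMin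
    exact ⟨f, hf, Or.inr hdesc⟩
end

section
/- Let T be a tournament on ℕ and let F ⊆ ℕ be a finite set transitive for T. Then F is extendable (i.e., F is contained in some infinite set transitive for T) if and only if the set of a ∉ F such that F ∪ {a} is transitive for T is infinite. -/
/-- `T` is a tournament on ℕ: irreflexive, and exactly one of `T x y`, `T y x`
holds for distinct `x`, `y`. -/
def IsTournament (T : ℕ → ℕ → Prop) : Prop :=
  (∀ x, ¬ T x x) ∧ ∀ x y, x ≠ y → (T x y ↔ ¬ T y x)

/-- `S` is transitive for the tournament `T`. -/
def TransitiveFor (T : ℕ → ℕ → Prop) (S : Set ℕ) : Prop :=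
  ∀ x ∈ S, ∀ y ∈ S, ∀ z ∈ S, T x y → T y z → T x z

/-- A set is extendable if it is contained in some infinite transitive set. -/
def Extendable (T : ℕ → ℕ → Prop) (F : Set ℕ) : Prop :=
  ∃ S : Set ℕ, S.Infinite ∧ TransitiveFor T S ∧ F ⊆ S

lemma transFor_mono {T : ℕ → ℕ → Prop} {S S' : Set ℕ} (h : S' ⊆ S)
    (hS : TransitiveFor T S) : TransitiveFor T S' :=
  fun x hx y hy z hz => hS x (h hx) y (h hy) z (h hz)

lemma tournament_swap {T : ℕ → ℕ → Prop} (hT : IsTournament T) :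
    IsTournament (Function.swap T) :=
  ⟨hT.1, fun x y hxy => hT.2 y x hxy.symm⟩

lemma transFor_swap {T : ℕ → ℕ → Prop} {S : Set ℕ}
    (h : TransitiveFor (Function.swap T) S) : TransitiveFor T S :=
  fun x hx y hy z hz hxy hyz => h z hz y hy x hx hyz hxy

/-- From a chain (w.r.t. index order) in a tournament, the range is transitive. -/
lemma chain_trans {T : ℕ → ℕ → Prop} (hT : IsTournament T) {f : ℕ → ℕ}
    (hf : Function.Injective f) (h : ∀ m n, m < n → T (f m) (f n)) :
    TransitiveFor T (Set.range f) := by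
  have key : ∀ i j, T (f i) (f j) → i < j := by
    intro i j hij
    rcases lt_trichotomy i j with h1 | h1 | h1
    · exact h1
    · subst h1; exact absurd hij (hT.1 _)
    · have hne : f i ≠ f j := fun he => absurd (hf he) h1.ne'
      exact absurd hij ((hT.2 (f j) (f i) hne.symm).mp (h j i h1)).elim
  rintro x ⟨i, rfl⟩ y ⟨j, rfl⟩ z ⟨k, rfl⟩ hxy hyz
  exact h i k ((key i j hxy).trans (key j k hyz))

/-- In any infinite set, a tournament has an infinite chain (one way or the other). -/
lemma exists_chain {T : ℕ → ℕ → Prop} (hT : IsTournament T) (S : Set ℕ)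
    (hS : S.Infinite) :
    ∃ f : ℕ → ℕ, Function.Injective f ∧ (∀ n, f n ∈ S) ∧
      ((∀ m n, m < n → T (f m) (f n)) ∨ (∀ m n, m < n → T (f n) (f m))) := by
  classical
  have key : ∀ U : {U : Set ℕ // U.Infinite}, ∃ p : ℕ × {U : Set ℕ // U.Infinite},
      p.1 ∈ U.1 ∧ p.2.1 ⊆ U.1 ∧ p.1 ∉ p.2.1 ∧
      ((∀ x ∈ p.2.1, T p.1 x) ∨ (∀ x ∈ p.2.1, T x p.1)) := by
    rintro ⟨U, hU⟩
    obtain ⟨a, ha⟩ := hU.nonempty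
    have hW : (U \ {a}).Infinite := hU.diff (Set.finite_singleton a)
    have hsplit : (U \ {a}) ⊆
        {x | x ∈ U \ {a} ∧ T a x} ∪ {x | x ∈ U \ {a} ∧ T x a} := by
      intro x hx
      by_cases hax : T a x
      · exact Or.inl ⟨hx, hax⟩
      · have hne : a ≠ x := fun he => hx.2 (he ▸ rfl)
        exact Or.inr ⟨hx, (hT.2 x a hne.symm).mpr hax⟩
    rcases Set.infinite_union.mp (hW.mono hsplit) with h1 | h1
    · refine ⟨(a, ⟨_, h1⟩), ha, fun x hx => hx.1.1, fun h => h.1.2 rfl,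
        Or.inl fun x hx => hx.2⟩
    · refine ⟨(a, ⟨_, h1⟩), ha, fun x hx => hx.1.1, fun h => h.1.2 rfl,
        Or.inr fun x hx => hx.2⟩
  choose step hmem hsub hnotmem hdisj using key
  let seq : ℕ → {U : Set ℕ // U.Infinite} :=
    fun n => Nat.rec ⟨S, hS⟩ (fun _ U => (step U).2) n
  let a : ℕ → ℕ := fun n => (step (seq n)).1
  have hstep_sub : ∀ n, (seq (n + 1)).1 ⊆ (seq n).1 := fun n => hsub (seq n)
  have hmono : ∀ m n, m ≤ n → (seq n).1 ⊆ (seq m).1 := by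
    intro m n hmn
    induction hmn with
    | refl => exact subset_rfl
    | step h ih => exact (hstep_sub _).trans ih
  have ha_mem : ∀ n, a n ∈ (seq n).1 := fun n => hmem (seq n)
  have ha_next : ∀ n, a n ∉ (seq (n + 1)).1 := fun n => hnotmem (seq n)
  have ha_in : ∀ m n, m < n → a n ∈ (seq (m + 1)).1 :=
    fun m n h => hmono (m + 1) n h (ha_mem n)
  have ha_ne : ∀ i j, i < j → a i ≠ a j := by
    intro i j hij he
    exact ha_next i (he ▸ ha_in i j hij)
  have ha_inj : Function.Injective a := by
    intro i j he
    rcases lt_trichotomy i j with h1 | h1 | h1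
    · exact absurd he (ha_ne i j h1)
    · exact h1
    · exact absurd he.symm (ha_ne j i h1)
  set G : Set ℕ := {n | ∀ x ∈ (seq (n + 1)).1, T (a n) x} with hGdef
  have hGor : ∀ n, n ∈ G ∨ (∀ x ∈ (seq (n + 1)).1, T x (a n)) := fun n => hdisj (seq n)
  by_cases hG : G.Infinite
  · haveI := hG.to_subtype
    let g := Nat.orderEmbeddingOfSet G
    have hg_mem : ∀ k, g k ∈ G := by
      intro k
      have : g k ∈ Set.range (g : ℕ → ℕ) := Set.mem_range_self k
      rwa [Nat.orderEmbeddingOfSet_range G] at this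
    refine ⟨a ∘ g, ha_inj.comp g.injective,
      fun n => hmono 0 (g n) (Nat.zero_le _) (ha_mem (g n)), Or.inl ?_⟩
    intro m n hmn
    exact hg_mem m _ (ha_in (g m) (g n) (g.strictMono hmn))
  · have hGc : Gᶜ.Infinite := (Set.not_infinite.mp hG).infinite_compl
    haveI := hGc.to_subtype
    let g := Nat.orderEmbeddingOfSet Gᶜ
    have hg_mem : ∀ k, g k ∈ Gᶜ := by
      intro k
      have : g k ∈ Set.range (g : ℕ → ℕ) := Set.mem_range_self k
      rwa [Nat.orderEmbeddingOfSet_range Gᶜ] at this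
    refine ⟨a ∘ g, ha_inj.comp g.injective,
      fun n => hmono 0 (g n) (Nat.zero_le _) (ha_mem (g n)), Or.inr ?_⟩
    intro m n hmn
    exact ((hGor (g m)).resolve_left (hg_mem m)) _ (ha_in (g m) (g n) (g.strictMono hmn))

/-- A finite transitive set is extendable iff it has infinitely many one point
transitive extensions. -/
theorem extendable_iff_infinitely_many_one_point_extensions
    (T : ℕ → ℕ → Prop) (hT : IsTournament T) (F : Finset ℕ)
    (hF : TransitiveFor T ↑F) :
    Extendable T ↑F ↔ {a | a ∉ F ∧ TransitiveFor T (insert a ↑F)}.Infinite := by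
  classical
  constructor
  · rintro ⟨S, hSinf, hStrans, hFS⟩
    refine (hSinf.diff F.finite_toSet).mono ?_
    rintro x ⟨hxS, hxF⟩
    exact ⟨hxF, transFor_mono (Set.insert_subset hxS hFS) hStrans⟩
  · intro hA
    set A : Set ℕ := {a | a ∉ F ∧ TransitiveFor T (insert a ↑F)} with hAdef
    -- pigeonhole on the "type" of each element of A relative to F
    haveI := hA.to_subtype
    let ψ : ℕ → (F → Bool) := fun a f => decide (T a f.1)
    obtain ⟨t, ht⟩ := Finite.exists_infinite_fiber (fun a : ↥A => ψ a.1)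
    have hpre : ((fun a : ↥A => ψ a.1) ⁻¹' {t}).Infinite := Set.infinite_coe_iff.mp ht
    set S₀ : Set ℕ := Subtype.val '' ((fun a : ↥A => ψ a.1) ⁻¹' {t}) with hS₀def
    have hS₀inf : S₀.Infinite := hpre.image (Subtype.coe_injective.injOn)
    have hS₀A : ∀ b ∈ S₀, b ∈ A ∧ ψ b = t := by
      rintro b ⟨⟨b', hb'⟩, hmem, rfl⟩
      exact ⟨hb', hmem⟩
    obtain ⟨f, hfinj, hfmem, hchain⟩ := exists_chain hT S₀ hS₀inf
    have hB : TransitiveFor T (Set.range f) := by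
      rcases hchain with h | h
      · exact chain_trans hT hfinj h
      · exact transFor_swap (chain_trans (tournament_swap hT) hfinj h)
    -- facts about elements of B := range f
    have hbA : ∀ b ∈ Set.range f, b ∉ F ∧ TransitiveFor T (insert b ↑F) := by
      rintro b hb
      exact (hS₀A b (by rcases hb with ⟨n, rfl⟩; exact hfmem n)).1
    have huni : ∀ b ∈ Set.range f, ∀ b' ∈ Set.range f, ∀ g ∈ F, (T b g ↔ T b' g) := by
      intro b hb b' hb' g hg
      have h1 : ψ b = t := (hS₀A b (by rcases hb with ⟨n, rfl⟩; exact hfmem n)).2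
      have h2 : ψ b' = t := (hS₀A b' (by rcases hb' with ⟨n, rfl⟩; exact hfmem n)).2
      have : ψ b ⟨g, hg⟩ = ψ b' ⟨g, hg⟩ := by rw [h1, h2]
      exact decide_eq_decide.mp this
    refine ⟨↑F ∪ Set.range f, ?_, ?_, Set.subset_union_left⟩
    · exact (Set.infinite_range_of_injective hfinj).mono Set.subset_union_right
    · intro x hx y hy z hz hxy hyz
      -- helper facts
      have hne : ∀ b ∈ Set.range f, ∀ g ∈ F, b ≠ g := by
        intro b hb g hg he
        exact (hbA b hb).1 (he ▸ hg)
      rcases hx with hx | hx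
      · rcases hy with hy | hy
        · rcases hz with hz | hz
          · exact hF x hx y hy z hz hxy hyz
          · -- F F B : use transitivity of insert z F
            exact (hbA z hz).2 x (Set.mem_insert_of_mem _ hx) y (Set.mem_insert_of_mem _ hy)
              z (Set.mem_insert _ _) hxy hyz
        · rcases hz with hz | hz
          · -- F B F
            exact (hbA y hy).2 x (Set.mem_insert_of_mem _ hx) y (Set.mem_insert _ _)
              z (Set.mem_insert_of_mem _ hz) hxy hyz
          · -- F B B : T x y, T y z with y,z ∈ B, x ∈ F
            have hyx : ¬ T y x := fun h => ((hT.2 y x (hne y hy x hx)).mp h) hxy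
            have hzx : ¬ T z x := fun h => hyx ((huni y hy z hz x hx).mpr h)
            exact (hT.2 x z (hne z hz x hx).symm).mpr hzx
      · rcases hy with hy | hy
        · rcases hz with hz | hz
          · -- B F F
            exact (hbA x hx).2 x (Set.mem_insert _ _) y (Set.mem_insert_of_mem _ hy)
              z (Set.mem_insert_of_mem _ hz) hxy hyz
          · -- B F B : contradiction from T x y and T y z
            have hzy : ¬ T z y := (hT.2 y z (hne z hz y hy).symm).mp hyz
            exact absurd ((huni x hx z hz y hy).mp hxy) hzy
        · rcases hz with hz | hz
          · -- B B F : T y z gives T x z by uniformity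
            exact (huni y hy x hx z hz).mp hyz
          · -- B B B
            exact hB x hx y hy z hz hxy hyz
end

section
/- Let T be a tournament on ℕ and let F ⊆ ℕ be a finite transitive extendable set. Then all but finitely many one point transitive extensions of F are extendable: the set of x ∉ F such that F ∪ {x} is transitive for T but F ∪ {x} is not extendable is finite. -/
/-!
Suppose the set `B` of bad one point extensions were infinite, and fix a nonprincipal
ultrafilter `U` containing `B`. Every `f ∈ F` beats either `U`-almost every point or
`U`-almost no point, so `U`-almost every `x ∈ B` relates to `F` in this limiting way.
Ramsey's theorem along `U` gives an infinite transitive set `X` of such points. As all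
points of `X` relate to `F` in the same way and each `F ∪ {x}` is transitive, `F ∪ X` is
transitive, so it witnesses that the extensions `F ∪ {x}`, `x ∈ X`, are extendable after all.
-/

open Filter

lemma Set.Infinite.exists_ultrafilter_le_cofinite {α : Type*} {s : Set α} (hs : s.Infinite) :
    ∃ U : Ultrafilter α, (U : Filter α) ≤ cofinite ∧ s ∈ U := by
  have := hs.cofinite_inf_principal_neBot
  obtain ⟨U, hU⟩ := Ultrafilter.exists_le (cofinite ⊓ 𝓟 s)
  exact ⟨U, hU.trans inf_le_left, le_principal_iff.mp (hU.trans inf_le_right)⟩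

lemma Ultrafilter.eventually_iff_eventually {α : Type*} (U : Ultrafilter α) (p : α → Prop) :
    ∀ᶠ x in U, (p x ↔ ∀ᶠ y in U, p y) := by
  by_cases h : ∀ᶠ y in U, p y
  · exact h.mono fun x hx => iff_of_true hx h
  · exact (Ultrafilter.eventually_not.mpr h).mono fun x hx => iff_of_false hx h

variable {T : ℕ → ℕ → Prop}

lemma TransitiveFor.of_swap {S : Set ℕ} (h : TransitiveFor (Function.swap T) S) :
    TransitiveFor T S :=
  fun x hx y hy z hz hxy hyz => h z hz y hy x hx hyz hxy

namespace IsTournament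

variable (hT : IsTournament T)
include hT

lemma swap : IsTournament (Function.swap T) :=
  ⟨hT.1, fun x y hxy => hT.2 y x hxy.symm⟩

lemma ne_of_rel {x y : ℕ} (h : T x y) : x ≠ y := by
  rintro rfl
  exact hT.1 x h

lemma not_rel_of_rel {x y : ℕ} (h : T x y) : ¬ T y x :=
  (hT.2 x y (hT.ne_of_rel h)).mp h

lemma rel_of_not_rel {x y : ℕ} (hxy : x ≠ y) (h : ¬ T y x) : T x y :=
  (hT.2 x y hxy).mpr h

lemma transitiveFor_range_of_forward {f : ℕ → ℕ} (hf : ∀ m n, m < n → T (f m) (f n)) :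
    TransitiveFor T (Set.range f) := by
  have lt_of_rel {m n : ℕ} (h : T (f m) (f n)) : m < n := by
    refine lt_of_not_ge fun hnm => ?_
    rcases hnm.lt_or_eq with hlt | rfl
    · exact hT.not_rel_of_rel (hf n m hlt) h
    · exact hT.1 _ h
  rintro _ ⟨i, rfl⟩ _ ⟨j, rfl⟩ _ ⟨k, rfl⟩ hij hjk
  exact hf i k ((lt_of_rel hij).trans (lt_of_rel hjk))

lemma exists_infinite_transitiveFor_of_eventually_forward (U : Ultrafilter ℕ) {D : Set ℕ}
    (hD : D ∈ U) (hfwd : ∀ᶠ x in U, ∀ᶠ y in U, T x y) :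
    ∃ X ⊆ D, X.Infinite ∧ TransitiveFor T X := by
  have hgood : ∀ᶠ x in U, x ∈ D ∧ ∀ᶠ y in U, T x y := inter_mem hD hfwd
  obtain ⟨f, hfD, hf⟩ :=
    exists_seq_of_forall_finset_exists (fun x => x ∈ D ∧ ∀ᶠ y in U, T x y) T fun s hs =>
      (hgood.and ((eventually_all_finset s).mpr fun x hx => (hs x hx).2)).exists
  have hinj : f.Injective := .of_lt_imp_ne fun m n h => hT.ne_of_rel (hf m n h)
  exact ⟨Set.range f, Set.range_subset_iff.mpr fun n => (hfD n).1,
    Set.infinite_range_of_injective hinj, hT.transitiveFor_range_of_forward hf⟩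

lemma eventually_forward_or_backward (U : Ultrafilter ℕ) (hU : (U : Filter ℕ) ≤ cofinite) :
    (∀ᶠ x in U, ∀ᶠ y in U, T x y) ∨ ∀ᶠ x in U, ∀ᶠ y in U, T y x := by
  refine Ultrafilter.eventually_or.mp <| .of_forall fun x => Ultrafilter.eventually_or.mp ?_
  filter_upwards [hU (Set.finite_singleton x).compl_mem_cofinite] with y hy
  by_cases h : T x y
  · exact Or.inl h
  · exact Or.inr (hT.rel_of_not_rel hy h)

/-- Ramsey's theorem for tournaments, along a nonprincipal ultrafilter. -/
lemma exists_infinite_transitiveFor (U : Ultrafilter ℕ) (hU : (U : Filter ℕ) ≤ cofinite)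
    {D : Set ℕ} (hD : D ∈ U) : ∃ X ⊆ D, X.Infinite ∧ TransitiveFor T X := by
  rcases hT.eventually_forward_or_backward U hU with hfwd | hbwd
  · exact hT.exists_infinite_transitiveFor_of_eventually_forward U hD hfwd
  · obtain ⟨X, hXD, hX, hXT⟩ :=
      hT.swap.exists_infinite_transitiveFor_of_eventually_forward U hD hbwd
    exact ⟨X, hXD, hX, hXT.of_swap⟩

lemma transitiveFor_union {F X : Set ℕ} (hFX : Disjoint F X) (hF : TransitiveFor T F)
    (hX : TransitiveFor T X) (hins : ∀ x ∈ X, TransitiveFor T (insert x F))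
    (hpat : ∀ f ∈ F, ∀ x ∈ X, ∀ y ∈ X, T f x → T f y) :
    TransitiveFor T (F ∪ X) := by
  have ne {a b : ℕ} (ha : a ∈ X) (hb : b ∈ F) : a ≠ b := by
    rintro rfl
    exact hFX.notMem_of_mem_right ha hb
  intro x hx y hy z hz hxy hyz
  rcases hx with hx | hx <;> rcases hy with hy | hy <;> rcases hz with hz | hz
  · exact hF x hx y hy z hz hxy hyz
  · exact hins z hz x (.inr hx) y (.inr hy) z (.inl rfl) hxy hyz
  · exact hins y hy x (.inr hx) y (.inl rfl) z (.inr hz) hxy hyz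
  · exact hpat x hx y hy z hz hxy
  · exact hins x hx x (.inl rfl) y (.inr hy) z (.inr hz) hxy hyz
  · exact absurd (hpat y hy z hz x hx hyz) (hT.not_rel_of_rel hxy)
  · exact hT.rel_of_not_rel (ne hx hz) fun hzx =>
      hT.not_rel_of_rel hyz (hpat z hz x hx y hy hzx)
  · exact hX x hx y hy z hz hxy hyz

end IsTournament

theorem cofinitely_many_extensions_extendable_general
    (T : ℕ → ℕ → Prop) (hT : IsTournament T) (F : Finset ℕ)
    (hFtrans : TransitiveFor T ↑F) :
    {x | x ∉ F ∧ TransitiveFor T (insert x ↑F) ∧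
      ¬ Extendable T (insert x ↑F)}.Finite := by
  by_contra hB
  obtain ⟨U, hU, hBU⟩ := Set.Infinite.exists_ultrafilter_le_cofinite hB
  have hlim : ∀ᶠ x in U, ∀ f ∈ F, (T f x ↔ ∀ᶠ y in U, T f y) :=
    (eventually_all_finset F).mpr fun f _ => U.eventually_iff_eventually (T f)
  obtain ⟨X, hXC, hXinf, hXtrans⟩ := hT.exists_infinite_transitiveFor U hU (inter_mem hBU hlim)
  obtain ⟨x₀, hx₀⟩ := hXinf.nonempty
  have hFX : Disjoint (↑F : Set ℕ) X := Set.disjoint_right.mpr fun x hx => (hXC hx).1.1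
  have hFXtrans : TransitiveFor T (↑F ∪ X) :=
    hT.transitiveFor_union hFX hFtrans hXtrans (fun x hx => (hXC hx).1.2.1)
      fun f hf x hx y hy hfx => ((hXC hy).2 f hf).mpr (((hXC hx).2 f hf).mp hfx)
  exact (hXC hx₀).1.2.2 ⟨↑F ∪ X, hXinf.mono Set.subset_union_right, hFXtrans,
    Set.insert_subset (.inr hx₀) Set.subset_union_left⟩

/-- If `F` is a finite transitive extendable set, then all but finitely many of its
one point transitive extensions are extendable. -/
theorem cofinitely_many_extensions_extendable
    (T : ℕ → ℕ → Prop) (hT : IsTournament T) (F : Finset ℕ)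
    (hFtrans : TransitiveFor T ↑F) (hFext : Extendable T ↑F) :
    {x | x ∉ F ∧ TransitiveFor T (insert x ↑F) ∧
      ¬ Extendable T (insert x ↑F)}.Finite :=
  cofinitely_many_extensions_extendable_general T hT F hFtrans
end

section
/- There is a computable tournament on ℕ with no infinite limit-computable (Δ⁰₂) transitive subtournament: there exists a computable function T : ℕ → ℕ → Bool with T x x = false for all x and, for all x ≠ y, exactly one of T x y, T y x equal to true, such that for every computable g : ℕ → ℕ → Bool for which the limit D(x) = lim_{s→∞} g x s exists for every x (i.e., for each x the sequence s ↦ g x s is eventually constant), the set {x | D(x) = true} is not an infinite set transitive for T. -/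
/-!
Let `approx e x y` be a uniform enumeration of limit approximations, the stage `y` guess whether
`x` lies in the `e`-th Δ⁰₂ set. The edges from the vertices `x < y` to `y` are decided at stage
`y`: the requirements `e < y` in turn claim the least pair `a < b < y` of vertices that stage `y`
guesses to lie in the `e`-th set and that no earlier requirement has claimed, and the edges from
`a` and `b` to `y` are oriented so that `a, b, y` form a 3-cycle.

If the `e`-th set `S` is infinite, take `2e + 2` of its elements, all below some `B`, and an
element `y ∈ S` so large that the guesses at stage `y` are correct below `B`. The earlier
requirements claim at most `2e` vertices, so requirement `e` claims a pair below `B`; this pair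
lies in `S` and forms a 3-cycle with `y`, so `S` is not transitive.
-/

open Filter
open Nat.Partrec (Code)
open Nat.Partrec.Code

theorem not_transitiveFor_of_cycle {T : ℕ → ℕ → Bool}
    (hT : ∀ x y, x ≠ y → T x y = !T y x) {S : Set ℕ} {a b c : ℕ}
    (ha : a ∈ S) (hb : b ∈ S) (hc : c ∈ S) (hac : a ≠ c)
    (hab : T a b = true) (hbc : T b c = true) (hca : T c a = true) :
    ¬TransitiveFor (fun x y => T x y = true) S := fun hS => by
  simpa [hT a c hac, hca] using hS a ha b hb c hc hab hbc

namespace CycleTournament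

variable (approx : ℕ → ℕ → ℕ → Bool)

def IsFree (used : List (ℕ × ℕ)) (x : ℕ) : Prop :=
  ∀ q ∈ used, ¬(x = q.1 ∨ x = q.2)

def Admissible (used : List (ℕ × ℕ)) (e y : ℕ) (p : ℕ × ℕ) : Prop :=
  p.1 < p.2 ∧ p.2 < y ∧ approx e p.1 y = true ∧ approx e p.2 y = true ∧
    IsFree used p.1 ∧ IsFree used p.2

instance (used : List (ℕ × ℕ)) (x : ℕ) : Decidable (IsFree used x) := by
  unfold IsFree; infer_instance

instance (used : List (ℕ × ℕ)) (e y : ℕ) (p : ℕ × ℕ) :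
    Decidable (Admissible approx used e y p) := by
  unfold Admissible; infer_instance

/-- Pairs `(a, b)` with `b < y` are searched in the order of `a + b * y`. -/
def choosePair (used : List (ℕ × ℕ)) (e y : ℕ) : Option (ℕ × ℕ) :=
  ((List.range (y * y)).find? fun j => Admissible approx used e y (j % y, j / y)).map
    fun j => (j % y, j / y)

/-- The pairs claimed at stage `y` by the requirements `e < n`, latest first. -/
def stagePairs (y : ℕ) : ℕ → List (ℕ × ℕ)
  | 0 => []
  | e + 1 => (choosePair approx (stagePairs y e) e y).toList ++ stagePairs y e

/-- Column `y` lists, for `x < y`, whether `x → y`; it is computed from the columns `b < y`. -/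
def nextColumn (cols : List (List Bool)) : List Bool :=
  (List.range cols.length).map fun x =>
    match (stagePairs approx cols.length cols.length).find? (fun q => x = q.1 ∨ x = q.2) with
    | none => true
    | some (a, b) =>
      if x = a then !(cols.getD b []).getD a true else (cols.getD b []).getD a true

def column : ℕ → List Bool
  | y => nextColumn approx ((List.range y).attach.map fun i => column i.1)
decreasing_by exact List.mem_range.1 i.2

def tournament (x y : ℕ) : Bool :=
  if x < y then (column approx y).getD x true
  else if y < x then !(column approx x).getD y true
  else false

theorem column_eq (y : ℕ) :
    column approx y = nextColumn approx ((List.range y).map (column approx)) := by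
  rw [column, List.attach_map_val]

theorem tournament_self (x : ℕ) : tournament approx x x = false := by
  simp [tournament]

theorem tournament_swap {x y : ℕ} (h : x ≠ y) :
    tournament approx x y = !tournament approx y x := by
  rcases h.lt_or_gt with h | h <;> simp [tournament, h, h.not_gt]

variable {approx}

theorem admissible_choosePair {used : List (ℕ × ℕ)} {e y : ℕ} {p : ℕ × ℕ}
    (h : choosePair approx used e y = some p) : Admissible approx used e y p := by
  obtain ⟨j, hj, rfl⟩ := Option.map_eq_some_iff.1 h
  simpa using (List.find?_range_eq_some.1 hj).1

theorem exists_choosePair_le {used : List (ℕ × ℕ)} {e y a b : ℕ}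
    (h : Admissible approx used e y (a, b)) :
    ∃ p, choosePair approx used e y = some p ∧ p.2 ≤ b := by
  have hay : a < y := h.1.trans h.2.1
  have hmod : (a + b * y) % y = a := by simp [Nat.mod_eq_of_lt hay]
  have hdiv : (a + b * y) / y = b := by
    rw [Nat.add_mul_div_right _ _ (by omega), Nat.div_eq_of_lt hay, zero_add]
  have hlt : a + b * y < y * y := by nlinarith [h.2.1]
  cases hfind : (List.range (y * y)).find? fun j => Admissible approx used e y (j % y, j / y) with
  | none =>
    have := List.find?_range_eq_none.1 hfind _ hlt
    simp [hmod, hdiv, h] at this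
  | some j =>
    refine ⟨(j % y, j / y), by simp [choosePair, hfind], ?_⟩
    have hj := List.find?_range_eq_some.1 hfind
    have hj_le : j ≤ a + b * y := by
      by_contra! hgt
      simpa [hmod, hdiv, h] using hj.2.2 _ hgt
    simpa [hdiv] using Nat.div_le_div_right (c := y) hj_le

theorem length_stagePairs_le (y n : ℕ) : (stagePairs approx y n).length ≤ n := by
  induction n with
  | zero => simp [stagePairs]
  | succ n ih =>
    rw [stagePairs, List.length_append]
    have := (choosePair approx (stagePairs approx y n) n y).length_toList_le
    omega

/-- Later requirements claim pairs avoiding `p`, so `p` is the first pair met by `p.1` and `p.2`. -/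
theorem find?_stagePairs {y e n : ℕ} {p : ℕ × ℕ} (hen : e < n)
    (hp : choosePair approx (stagePairs approx y e) e y = some p) {x : ℕ}
    (hx : x = p.1 ∨ x = p.2) :
    (stagePairs approx y n).find? (fun q => x = q.1 ∨ x = q.2) = some p := by
  induction n, hen using Nat.le_induction with
  | base => simp [stagePairs, hp, hx]
  | succ n hen ih =>
    rw [stagePairs]
    cases hq : choosePair approx (stagePairs approx y n) n y with
    | none => simpa using ih
    | some q =>
      have hmem : p ∈ stagePairs approx y n := List.mem_of_find?_eq_some ih
      obtain ⟨-, -, -, -, hq₁, hq₂⟩ := admissible_choosePair hq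
      have hxq : ¬(x = q.1 ∨ x = q.2) := by
        rintro (rfl | rfl)
        · exact hq₁ p hmem hx
        · exact hq₂ p hmem hx
      rw [Option.toList_some, List.singleton_append,
        List.find?_cons_of_neg (by simpa using hxq), ih]

theorem tournament_eq_of_find? {x y : ℕ} {p : ℕ × ℕ} (hxy : x < y) (hp : p.1 < p.2)
    (hpy : p.2 < y) (h : (stagePairs approx y y).find? (fun q => x = q.1 ∨ x = q.2) = some p) :
    tournament approx x y =
      if x = p.1 then !tournament approx p.1 p.2 else tournament approx p.1 p.2 := by
  simp only [tournament, hxy, hp, if_true]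
  rw [column_eq]
  simp only [nextColumn, List.length_map, List.length_range, List.getD_eq_getElem?_getD,
    List.getElem?_map, List.getElem?_range hxy, List.getElem?_range hpy, Option.map_some,
    Option.getD_some, h]

theorem exists_free_pair (used : List (ℕ × ℕ)) {F : Finset ℕ}
    (hF : 2 * used.length + 2 ≤ F.card) :
    ∃ a ∈ F, ∃ b ∈ F, a < b ∧ IsFree used a ∧ IsFree used b := by
  set U := (used.flatMap fun q => [q.1, q.2]).toFinset
  have hU : U.card ≤ 2 * used.length :=
    (List.toFinset_card_le _).trans (by simp [List.length_flatMap, mul_comm])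
  have hfree : ∀ x ∉ U, IsFree used x := by
    intro x hx q hq hxq
    exact hx (List.mem_toFinset.2 (List.mem_flatMap.2 ⟨q, hq, by simpa using hxq⟩))
  obtain ⟨a, ha, b, hb, hab⟩ := Finset.one_lt_card.1
    (show 1 < (F \ U).card by have := Finset.le_card_sdiff U F; omega)
  rw [Finset.mem_sdiff] at ha hb
  rcases hab.lt_or_gt with h | h
  · exact ⟨a, ha.1, b, hb.1, h, hfree a ha.2, hfree b hb.2⟩
  · exact ⟨b, hb.1, a, ha.1, h, hfree b hb.2, hfree a ha.2⟩

theorem exists_planted_cycle {e : ℕ} {D : ℕ → Bool}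
    (hD : ∀ x, ∀ᶠ y in atTop, approx e x y = D x) (hinf : {x | D x = true}.Infinite) :
    ∃ a b y, a < b ∧ b < y ∧ D a = true ∧ D b = true ∧ D y = true ∧
      tournament approx a y = !tournament approx a b ∧
      tournament approx b y = tournament approx a b := by
  obtain ⟨F, hFD, hFcard⟩ := hinf.exists_subset_card_eq (2 * e + 2)
  obtain ⟨B, hB⟩ : ∃ B, ∀ x ∈ F, x ≤ B :=
    ⟨F.sup id, fun x hx => Finset.le_sup (f := id) hx⟩
  have hstable : ∀ᶠ y in atTop, ∀ x ∈ Set.Iic B, approx e x y = D x :=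
    (Set.finite_Iic B).eventually_all.2 fun x _ => hD x
  obtain ⟨y, hyD, hy, hBy, hey⟩ : ∃ y, D y = true ∧
      (∀ x ∈ Set.Iic B, approx e x y = D x) ∧ B < y ∧ e < y :=
    ((Nat.frequently_atTop_iff_infinite.2 hinf).and_eventually
      (hstable.and ((eventually_gt_atTop B).and (eventually_gt_atTop e)))).exists
  have hDB : ∀ x ≤ B, approx e x y = true ↔ D x = true := fun x hx => by rw [hy x hx]
  obtain ⟨a, ha, b, hb, hab, hfa, hfb⟩ := exists_free_pair (stagePairs approx y e)
    (F := F) (by have := length_stagePairs_le (approx := approx) y e; omega)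
  have hadm : Admissible approx (stagePairs approx y e) e y (a, b) :=
    ⟨hab, (hB b hb).trans_lt hBy, (hDB a (hB a ha)).2 (hFD ha), (hDB b (hB b hb)).2 (hFD hb),
      hfa, hfb⟩
  obtain ⟨p, hp, hpb⟩ := exists_choosePair_le hadm
  obtain ⟨hp₁₂, hp₂y, hp₁, hp₂, -, -⟩ := admissible_choosePair hp
  have hpB : p.2 ≤ B := hpb.trans (hB b hb)
  refine ⟨p.1, p.2, y, hp₁₂, hp₂y, (hDB _ (by omega)).1 hp₁, (hDB _ hpB).1 hp₂, hyD, ?_, ?_⟩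
  · rw [tournament_eq_of_find? (hp₁₂.trans hp₂y) hp₁₂ hp₂y
      (find?_stagePairs hey hp (Or.inl rfl)), if_pos rfl]
  · rw [tournament_eq_of_find? hp₂y hp₁₂ hp₂y (find?_stagePairs hey hp (Or.inr rfl)),
      if_neg hp₁₂.ne']

theorem not_infinite_and_transitiveFor {e : ℕ} {D : ℕ → Bool}
    (hD : ∀ x, ∀ᶠ y in atTop, approx e x y = D x) :
    ¬({x | D x = true}.Infinite ∧
      TransitiveFor (fun x y => tournament approx x y = true) {x | D x = true}) := by
  rintro ⟨hinf, htr⟩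
  obtain ⟨a, b, y, hab, hby, ha, hb, hy, hay, hbyt⟩ := exists_planted_cycle hD hinf
  have hswap := fun x y => tournament_swap approx (x := x) (y := y)
  cases hT : tournament approx a b
  · refine not_transitiveFor_of_cycle hswap hb ha hy hby.ne ?_ ?_ ?_ htr
    · simp [hswap _ _ hab.ne', hT]
    · simp [hay, hT]
    · simp [hswap _ _ hby.ne', hbyt, hT]
  · refine not_transitiveFor_of_cycle hswap ha hb hy (hab.trans hby).ne hT ?_ ?_ htr
    · simp [hbyt, hT]
    · simp [hswap _ _ (hab.trans hby).ne', hay, hT]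

section Primrec

open Primrec

theorem primrecRel_isFree : PrimrecRel IsFree :=
  PrimrecRel.forall_mem_list (R := fun (q : ℕ × ℕ) x => ¬(x = q.1 ∨ x = q.2))
    (PrimrecPred.or (Primrec.eq.comp snd (fst.comp fst))
      (Primrec.eq.comp snd (snd.comp fst))).not

variable {approx : ℕ → ℕ → ℕ → Bool}
  (happrox : Primrec fun p : ℕ × ℕ × ℕ => approx p.1 p.2.1 p.2.2)
include happrox

theorem primrecPred_admissible :
    PrimrecPred fun t : (List (ℕ × ℕ) × ℕ × ℕ) × ℕ × ℕ =>
      Admissible approx t.1.1 t.1.2.1 t.1.2.2 t.2 := by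
  have hy : Primrec fun t : (List (ℕ × ℕ) × ℕ × ℕ) × ℕ × ℕ => t.1.2.2 :=
    snd.comp (snd.comp fst)
  have happ (f : (List (ℕ × ℕ) × ℕ × ℕ) × ℕ × ℕ → ℕ) (hf : Primrec f) :
      PrimrecPred fun t : (List (ℕ × ℕ) × ℕ × ℕ) × ℕ × ℕ =>
        approx t.1.2.1 (f t) t.1.2.2 = true :=
    Primrec.eq.comp (happrox.comp (pair (fst.comp (snd.comp fst)) (pair hf hy))) (const true)
  exact (nat_lt.comp (fst.comp snd) (snd.comp snd)).and <|
    (nat_lt.comp (snd.comp snd) hy).and <|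
    (happ _ (fst.comp snd)).and <| (happ _ (snd.comp snd)).and <|
    (primrecRel_isFree.comp (fst.comp fst) (fst.comp snd)).and
      (primrecRel_isFree.comp (fst.comp fst) (snd.comp snd))

theorem primrec_choosePair :
    Primrec fun t : List (ℕ × ℕ) × ℕ × ℕ => choosePair approx t.1 t.2.1 t.2.2 := by
  have hy : Primrec fun t : List (ℕ × ℕ) × ℕ × ℕ => t.2.2 := snd.comp snd
  have hsplit : Primrec₂ fun (t : List (ℕ × ℕ) × ℕ × ℕ) (j : ℕ) => (j % t.2.2, j / t.2.2) :=
    pair (nat_mod.comp snd (hy.comp fst)) (nat_div.comp snd (hy.comp fst))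
  have hfilter := PrimrecRel.listFilter
    (R := fun j (t : List (ℕ × ℕ) × ℕ × ℕ) =>
      Admissible approx t.1 t.2.1 t.2.2 (j % t.2.2, j / t.2.2))
    ((primrecPred_admissible happrox).comp (pair snd (hsplit.comp snd fst)))
  refine (option_map
    (list_head?.comp (hfilter.comp (list_range.comp (nat_mul.comp hy hy)) .id))
    hsplit).of_eq fun t => ?_
  simp [choosePair, List.head?_filter]

theorem primrec_stagePairs : Primrec₂ (stagePairs approx) := by
  refine (nat_rec (f := fun _ => [])
    (g := fun y p => (choosePair approx p.2 p.1 y).toList ++ p.2) (const [])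
    (list_append.comp (optionToList.comp ((primrec_choosePair happrox).comp
      (pair (snd.comp snd) (pair (fst.comp snd) fst)))) (snd.comp snd))).of_eq fun y n => ?_
  induction n with
  | zero => rfl
  | succ n ih => simp [stagePairs, ih]

theorem primrec_nextColumn : Primrec (nextColumn approx) := by
  have hy : Primrec fun t : List (List Bool) × ℕ => t.1.length := list_length.comp fst
  have hfind := PrimrecRel.listFilter (R := fun (q : ℕ × ℕ) x => x = q.1 ∨ x = q.2)
    (PrimrecPred.or (Primrec.eq.comp snd (fst.comp fst)) (Primrec.eq.comp snd (snd.comp fst)))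
  have hedge : Primrec fun u : (List (List Bool) × ℕ) × ℕ × ℕ =>
      (u.1.1.getD u.2.2 []).getD u.2.1 true :=
    (list_getD true).comp ((list_getD []).comp (fst.comp fst) (snd.comp snd)) (fst.comp snd)
  have hentry := option_casesOn
    (list_head?.comp (hfind.comp ((primrec_stagePairs happrox).comp hy hy) snd)) (const true)
    (Primrec.ite (Primrec.eq.comp (snd.comp fst) (fst.comp snd))
      (Primrec.not.comp hedge) hedge).to₂
  refine (list_map (list_range.comp list_length) hentry.to₂).of_eq fun cols => ?_
  simp only [nextColumn, List.head?_filter]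
  congr 1
  funext x
  rcases List.find? _ _ with _ | ⟨a, b⟩ <;> rfl

theorem primrec_column : Primrec (column approx) :=
  (nat_strong_rec (fun (_ : Unit) => column approx)
    (option_some.comp ((primrec_nextColumn happrox).comp snd)).to₂
    fun _ y => by rw [column_eq]).comp (const ()) .id

theorem primrec₂_tournament : Primrec₂ (tournament approx) :=
  Primrec.ite (nat_lt.comp fst snd)
    ((list_getD true).comp ((primrec_column happrox).comp snd) fst) <|
  Primrec.ite (nat_lt.comp snd fst)
    (Primrec.not.comp ((list_getD true).comp ((primrec_column happrox).comp fst) snd))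
    (const false)

end Primrec

end CycleTournament

def lastHalting (c : Code) (x y : ℕ) : ℕ :=
  Nat.findGreatest (fun s => (evaln y c (Nat.pair x s)).isSome) y

/-- Reads `φₑ(x, s)` for `s = lastHalting`, the largest `s ≤ y` whose computation halts within
`y` steps; the booleans `false, true` are coded as `0, 1`. -/
def deltaTwoApprox (e x y : ℕ) : Bool :=
  let c := Denumerable.ofNat Code e
  (evaln y c (Nat.pair x (lastHalting c x y))).getD 0 == 1

theorem Computable₂.exists_code_toNat {g : ℕ → ℕ → Bool} (hg : Computable₂ g) :
    ∃ c : Code, ∀ x s, eval c (Nat.pair x s) = Part.some (g x s).toNat := by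
  have hcode : Computable fun n : ℕ => (g n.unpair.1 n.unpair.2).toNat :=
    Computable.cond (hg.comp (Computable.fst.comp .unpair) (Computable.snd.comp .unpair))
      (Computable.const 1) (Computable.const 0)
  obtain ⟨c, hc⟩ := exists_code.1 (Partrec.nat_iff.1 hcode.partrec)
  exact ⟨c, fun x s => by simp [hc]⟩

theorem exists_eventually_deltaTwoApprox_eq {g : ℕ → ℕ → Bool} (hg : Computable₂ g) :
    ∃ e, ∀ x b, (∀ᶠ s in atTop, g x s = b) → ∀ᶠ y in atTop, deltaTwoApprox e x y = b := by
  obtain ⟨c, hc⟩ := hg.exists_code_toNat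
  refine ⟨Encodable.encode c, fun x b hb => ?_⟩
  obtain ⟨s₀, hs₀⟩ := eventually_atTop.1 hb
  obtain ⟨k, hk⟩ := evaln_complete.1 (hc x s₀ ▸ Part.mem_some _)
  filter_upwards [eventually_ge_atTop (max k s₀)] with y hy
  have hhalt : (evaln y c (Nat.pair x s₀)).isSome :=
    Option.isSome_iff_exists.2 ⟨_, evaln_mono (le_of_max_le_left hy) hk⟩
  have hle : s₀ ≤ lastHalting c x y := Nat.le_findGreatest (le_of_max_le_right hy) hhalt
  obtain ⟨v, hv⟩ : ∃ v, evaln y c (Nat.pair x (lastHalting c x y)) = some v :=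
    Option.isSome_iff_exists.1 <| Nat.findGreatest_spec
      (P := fun s => (evaln y c (Nat.pair x s)).isSome) (le_of_max_le_right hy) hhalt
  have hvg : v = (g x (lastHalting c x y)).toNat :=
    Part.mem_some_iff.1 (hc x _ ▸ evaln_sound hv)
  rw [deltaTwoApprox, Denumerable.ofNat_encode, hv, Option.getD_some, hvg, hs₀ _ hle]
  cases b <;> rfl

section Primrec

open Primrec

theorem primrec_lastHalting : Primrec fun p : Code × ℕ × ℕ => lastHalting p.1 p.2.1 p.2.2 :=
  nat_findGreatest (snd.comp snd) <| Primrec.eq.comp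
    (option_isSome.comp <| primrec_evaln.comp <|
      pair (pair (snd.comp (snd.comp fst)) (fst.comp fst))
        (Primrec₂.natPair.comp (fst.comp (snd.comp fst)) snd))
    (const true)

theorem primrec_deltaTwoApprox :
    Primrec fun p : ℕ × ℕ × ℕ => deltaTwoApprox p.1 p.2.1 p.2.2 := by
  have hc : Primrec fun p : ℕ × ℕ × ℕ => Denumerable.ofNat Code p.1 :=
    (Primrec.ofNat Code).comp fst
  exact Primrec.beq.comp (option_getD.comp (primrec_evaln.comp <|
    pair (pair (snd.comp snd) hc) <| Primrec₂.natPair.comp (fst.comp snd) <|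
      primrec_lastHalting.comp (pair hc snd)) (const 0)) (const 1)

end Primrec

/-- There is a computable tournament on ℕ with no infinite Δ⁰₂ (limit-computable)
transitive subtournament. -/
theorem computable_tournament_no_delta2_solution :
    ∃ T : ℕ → ℕ → Bool, Computable₂ T ∧ (∀ x, T x x = false) ∧
      (∀ x y : ℕ, x ≠ y → T x y = !T y x) ∧
      ∀ g : ℕ → ℕ → Bool, Computable₂ g → ∀ D : ℕ → Bool,
        (∀ x, ∃ s₀, ∀ s, s₀ ≤ s → g x s = D x) →
        ¬ ({x | D x = true}.Infinite ∧
            TransitiveFor (fun x y => T x y = true) {x | D x = true}) := by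
  refine ⟨CycleTournament.tournament deltaTwoApprox,
    (CycleTournament.primrec₂_tournament primrec_deltaTwoApprox).to_comp,
    CycleTournament.tournament_self _, fun x y => CycleTournament.tournament_swap _, ?_⟩
  intro g hg D hD
  obtain ⟨e, he⟩ := exists_eventually_deltaTwoApprox_eq hg
  exact CycleTournament.not_infinite_and_transitiveFor fun x =>
    he x (D x) (eventually_atTop.2 (hD x))
end

section
/- Let T be a tournament on ℕ, let F be a finite set transitive for T, and let I be a minimal interval of F that is infinite. Then for any finite set J ⊆ I such that F ∪ J is transitive for T, there is a partition J = P ∪ Q (P ∩ Q = ∅) such that both F ∪ P and F ∪ Q are extendable and each of F ∪ P and F ∪ Q has a minimal interval that is contained in I and is infinite. -/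
/-- `I` is a minimal interval of the finite transitive set `F`: for some
`≤_F`-downward-closed `C ⊆ F`, `I` is the set of `x ∉ F` such that `F ∪ {x}` is
transitive and the elements of `F` that `T`-precede `x` are exactly those of `C`. -/
def MinimalInterval (T : ℕ → ℕ → Prop) (F : Finset ℕ) (I : Set ℕ) : Prop :=
  ∃ C : Finset ℕ, C ⊆ F ∧ (∀ a ∈ C, ∀ b ∈ F, T b a → b ∈ C) ∧
    I = {x | x ∉ F ∧ TransitiveFor T (insert x ↑F) ∧ ∀ f ∈ F, (T f x ↔ f ∈ C)}

/-!
Sort the points of `I \ J` by the set `D ⊆ J` of elements of `J` preceding them. There are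
finitely many such patterns, so one of them is shared by infinitely many points, and Ramsey's
theorem for tournaments (the usual pivot argument) yields an infinite transitive set `S` among
them. Every element of `D` precedes all of `S` and `S` precedes every element of `J \ D`, so
`F ∪ D ∪ S` and `F ∪ S ∪ (J \ D)` are transitive, and `S` lies in the minimal interval of
`F ∪ D` cut at `C ∪ D` and in that of `F ∪ (J \ D)` cut at `C`, where `C` is the cut of `I`.
-/

open Set Function

variable {T : ℕ → ℕ → Prop}

namespace IsTournament

lemma asymm (hT : IsTournament T) {x y : ℕ} (hxy : T x y) : ¬ T y x := by
  rcases eq_or_ne x y with rfl | hne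
  · exact absurd hxy (hT.1 x)
  · exact (hT.2 x y hne).1 hxy

lemma of_not (hT : IsTournament T) {x y : ℕ} (hne : x ≠ y) (h : ¬ T x y) : T y x :=
  (hT.2 y x hne.symm).2 h

protected lemma flip (hT : IsTournament T) : IsTournament (flip T) :=
  ⟨hT.1, fun x y hne => hT.2 y x hne.symm⟩

end IsTournament

namespace TransitiveFor

lemma mono {A B : Set ℕ} (hB : TransitiveFor T B) (hAB : A ⊆ B) : TransitiveFor T A :=
  fun x hx y hy z hz => hB x (hAB hx) y (hAB hy) z (hAB hz)

lemma of_flip {S : Set ℕ} (h : TransitiveFor (flip T) S) : TransitiveFor T S :=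
  fun x hx y hy z hz hxy hyz => h z hz y hy x hx hyz hxy

lemma union (hT : IsTournament T) {A B : Set ℕ} (hA : TransitiveFor T A)
    (hB : TransitiveFor T B) (hAB : ∀ a ∈ A, ∀ b ∈ B, T a b) : TransitiveFor T (A ∪ B) := by
  rintro x (hx | hx) y (hy | hy) z (hz | hz) hxy hyz
  exacts [hA x hx y hy z hz hxy hyz, hAB x hx z hz, (hT.asymm hyz (hAB z hz y hy)).elim,
    hAB x hx z hz, (hT.asymm hxy (hAB y hy x hx)).elim, (hT.asymm hxy (hAB y hy x hx)).elim,
    (hT.asymm hyz (hAB z hz y hy)).elim, hB x hx y hy z hz hxy hyz]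

end TransitiveFor

lemma Set.Infinite.exists_infinite_subset_forall_iff {Y : Set ℕ} (hY : Y.Infinite)
    (R : ℕ → ℕ → Prop) :
    ∃ a ∈ Y, ∃ Z ⊆ Y \ {a}, Z.Infinite ∧ ∀ z ∈ Z, ∀ z' ∈ Z, (R a z ↔ R a z') := by
  obtain ⟨a, ha⟩ := hY.nonempty
  have hY' : (Y \ {a}).Infinite := hY.sdiff (finite_singleton a)
  by_cases hR : {z ∈ Y \ {a} | R a z}.Infinite
  · exact ⟨a, ha, _, sep_subset _ _, hR, fun z hz z' hz' => iff_of_true hz.2 hz'.2⟩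
  · refine ⟨a, ha, {z ∈ Y \ {a} | ¬ R a z}, sep_subset _ _, ?_,
      fun z hz z' hz' => iff_of_false hz.2 hz'.2⟩
    exact (hY'.sdiff (not_infinite.1 hR)).mono fun z hz => ⟨hz.1, fun h => hz.2 ⟨hz.1, h⟩⟩

lemma Set.Infinite.exists_seq_forall_lt_iff {X : Set ℕ} (hX : X.Infinite) (R : ℕ → ℕ → Prop) :
    ∃ a : ℕ → ℕ, (∀ n, a n ∈ X) ∧ Injective a ∧
      ∀ m n, m < n → (R (a m) (a n) ↔ R (a m) (a (m + 1))) := by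
  choose pivot hpivot next hnext hnext_inf hhom using
    fun Y : {Y : Set ℕ // Y.Infinite} => Y.2.exists_infinite_subset_forall_iff R
  let Y (n : ℕ) : {Y : Set ℕ // Y.Infinite} :=
    (fun Y => ⟨next Y, hnext_inf Y⟩)^[n] ⟨X, hX⟩
  have hY_succ (n : ℕ) : (Y (n + 1)).1 = next (Y n) := by
    simp only [Y, iterate_succ_apply']
  have hY_anti : Antitone fun n => (Y n).1 :=
    antitone_nat_of_succ_le fun n => (hY_succ n).trans_subset ((hnext _).trans sdiff_subset)
  have hlater {m n : ℕ} (hmn : m < n) : pivot (Y n) ∈ next (Y m) :=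
    hY_succ m ▸ hY_anti hmn (hpivot _)
  refine ⟨fun n => pivot (Y n), fun n => hY_anti n.zero_le (hpivot _),
    Injective.of_lt_imp_ne fun m n hmn h => (hnext _ (hlater hmn)).2 h.symm,
    fun m n hmn => hhom _ _ (hlater hmn) _ (hlater m.lt_succ_self)⟩

lemma IsTournament.transitiveFor_image (hT : IsTournament T) {a : ℕ → ℕ} {N : Set ℕ}
    (h : ∀ m ∈ N, ∀ n ∈ N, m < n → T (a m) (a n)) : TransitiveFor T (a '' N) := by
  have lt_of_rel : ∀ m ∈ N, ∀ n ∈ N, T (a m) (a n) → m < n := by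
    intro m hm n hn hmn
    rcases lt_trichotomy m n with hlt | rfl | hgt
    · exact hlt
    · exact absurd hmn (hT.1 _)
    · exact absurd (h n hn m hm hgt) (hT.asymm hmn)
  rintro _ ⟨i, hi, rfl⟩ _ ⟨j, hj, rfl⟩ _ ⟨k, hk, rfl⟩ hij hjk
  exact h i hi k hk ((lt_of_rel i hi j hj hij).trans (lt_of_rel j hj k hk hjk))

theorem IsTournament.exists_infinite_transitiveFor_subset (hT : IsTournament T) {X : Set ℕ}
    (hX : X.Infinite) : ∃ S ⊆ X, S.Infinite ∧ TransitiveFor T S := by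
  obtain ⟨a, haX, ha_inj, ha_iff⟩ := hX.exists_seq_forall_lt_iff T
  have himage (N : Set ℕ) : a '' N ⊆ X := image_subset_iff.2 fun n _ => haX n
  -- Colour `m` by the side of `a m` on which all later terms lie; either colour class is
  -- infinite, and its image is ordered like its indices, reversed for the second colour.
  by_cases hN : {m | T (a m) (a (m + 1))}.Infinite
  · refine ⟨_, himage _, hN.image ha_inj.injOn, hT.transitiveFor_image ?_⟩
    exact fun m hm n _ hmn => (ha_iff m n hmn).2 hm
  · refine ⟨_, himage _, (not_infinite.1 hN).infinite_compl.image ha_inj.injOn,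
      (hT.flip.transitiveFor_image ?_).of_flip⟩
    exact fun m hm n _ hmn => hT.of_not (ha_inj.ne hmn.ne) (mt (ha_iff m n hmn).1 hm)

lemma Set.Infinite.exists_infinite_setOf_forall_iff {X : Set ℕ} (hX : X.Infinite)
    (R : ℕ → ℕ → Prop) (J : Finset ℕ) : ∃ D ⊆ J, {x ∈ X | ∀ j ∈ J, R j x ↔ j ∈ D}.Infinite := by
  classical
  by_contra! h
  refine hX ((J.powerset.finite_toSet.biUnion fun D hD => h D (Finset.mem_powerset.1 hD)).subset
    fun x hx => mem_biUnion (Finset.mem_powerset.2 (Finset.filter_subset (R · x) J)) ⟨hx, ?_⟩)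
  simp +contextual

def cutInterval (T : ℕ → ℕ → Prop) (F C : Finset ℕ) : Set ℕ :=
  {x | x ∉ F ∧ TransitiveFor T (insert x ↑F) ∧ ∀ f ∈ F, (T f x ↔ f ∈ C)}

def IsLowerCut (T : ℕ → ℕ → Prop) (F C : Finset ℕ) : Prop :=
  C ⊆ F ∧ ∀ a ∈ C, ∀ b ∈ F, T b a → b ∈ C

lemma minimalInterval_iff {F : Finset ℕ} {I : Set ℕ} :
    MinimalInterval T F I ↔ ∃ C, IsLowerCut T F C ∧ I = cutInterval T F C := by
  simp only [MinimalInterval, IsLowerCut, cutInterval, and_assoc]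

section Cut

variable {F C : Finset ℕ}

lemma TransitiveFor.union_of_subset_cutInterval (hT : IsTournament T) (hF : TransitiveFor T ↑F)
    {S : Set ℕ} (hS : TransitiveFor T S) (hSI : S ⊆ cutInterval T F C) :
    TransitiveFor T (↑F ∪ S) := by
  rintro x (hx | hx) y (hy | hy) z (hz | hz) hxy hyz
  · exact hF x hx y hy z hz hxy hyz
  · exact (hSI hz).2.1 x (.inr hx) y (.inr hy) z (.inl rfl) hxy hyz
  · exact (hSI hy).2.1 x (.inr hx) y (.inl rfl) z (.inr hz) hxy hyz
  · exact ((hSI hz).2.2 x hx).2 (((hSI hy).2.2 x hx).1 hxy)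
  · exact (hSI hx).2.1 x (.inl rfl) y (.inr hy) z (.inr hz) hxy hyz
  · exact (hT.asymm hxy (((hSI hx).2.2 y hy).2 (((hSI hz).2.2 y hy).1 hyz))).elim
  · have hzC : z ∉ C := fun hzC => hT.asymm hyz (((hSI hy).2.2 z hz).2 hzC)
    exact hT.of_not (fun h => (hSI hx).1 (h ▸ hz)) (mt ((hSI hx).2.2 z hz).1 hzC)
  · exact hS x hx y hy z hz hxy hyz

lemma cutInterval_union_subset {A B : Finset ℕ} (hFB : Disjoint F B) :
    cutInterval T (F ∪ A) (C ∪ B) ⊆ cutInterval T F C := by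
  rintro x ⟨hxFA, hx_trans, hx_cut⟩
  refine ⟨fun hxF => hxFA (Finset.mem_union_left _ hxF), hx_trans.mono ?_, fun f hf => ?_⟩
  · exact insert_subset_insert (by simp)
  · rw [hx_cut f (Finset.mem_union_left _ hf), Finset.mem_union,
      or_iff_left (Finset.disjoint_left.1 hFB hf)]

variable {A B : Finset ℕ} {S : Set ℕ}

lemma IsLowerCut.union (hT : IsTournament T) (hC : IsLowerCut T F C)
    (hAI : ↑A ⊆ cutInterval T F C) (hS : S.Nonempty) (hAS : TransitiveFor T (↑A ∪ S))
    (hBA : B ⊆ A) (hB : ∀ s ∈ S, ∀ a ∈ A, T a s ↔ a ∈ B) :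
    IsLowerCut T (F ∪ A) (C ∪ B) := by
  obtain ⟨s, hs⟩ := hS
  refine ⟨Finset.union_subset_union hC.1 hBA, fun a ha b hb hba => ?_⟩
  simp only [Finset.mem_union] at ha hb ⊢
  rcases ha with haC | haB <;> rcases hb with hbF | hbA
  · exact .inl (hC.2 a haC b hbF hba)
  · exact (hT.asymm hba (((hAI hbA).2.2 a (hC.1 haC)).2 haC)).elim
  · exact .inl (((hAI (hBA haB)).2.2 b hbF).1 hba)
  · have has : T a s := (hB s hs a (hBA haB)).2 haB
    exact .inr ((hB s hs b hbA).1 (hAS b (.inl hbA) a (.inl (hBA haB)) s (.inr hs) hba has))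

lemma subset_cutInterval_union (hT : IsTournament T) (hF : TransitiveFor T ↑F) (hCF : C ⊆ F)
    (hAI : ↑A ⊆ cutInterval T F C) (hSI : S ⊆ cutInterval T F C) (hAS : Disjoint ↑A S)
    (hAS_trans : TransitiveFor T (↑A ∪ S)) (hBA : B ⊆ A) (hB : ∀ s ∈ S, ∀ a ∈ A, T a s ↔ a ∈ B) :
    S ⊆ cutInterval T (F ∪ A) (C ∪ B) := by
  intro s hs
  have hsA : s ∉ A := fun h => disjoint_left.1 hAS h hs
  refine ⟨by simp [(hSI hs).1, hsA], ?_, fun f hf => ?_⟩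
  · refine (hF.union_of_subset_cutInterval hT hAS_trans (union_subset hAI hSI)).mono ?_
    rw [Finset.coe_union]
    exact insert_subset (.inr (.inr hs)) (union_subset_union_right _ subset_union_left)
  · rcases Finset.mem_union.1 hf with hfF | hfA
    · have hfB : f ∉ B := fun h => (hAI (hBA h)).1 hfF
      rw [(hSI hs).2.2 f hfF, Finset.mem_union, or_iff_left hfB]
    · have hfC : f ∉ C := fun h => (hAI hfA).1 (hCF h)
      rw [hB s hs f hfA, Finset.mem_union, or_iff_right hfC]

lemma exists_infinite_minimalInterval_union (hT : IsTournament T) (hF : TransitiveFor T ↑F)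
    (hC : IsLowerCut T F C) (hAI : ↑A ⊆ cutInterval T F C) (hSI : S ⊆ cutInterval T F C)
    (hAS : Disjoint ↑A S) (hS : S.Infinite) (hAS_trans : TransitiveFor T (↑A ∪ S))
    (hBA : B ⊆ A) (hB : ∀ s ∈ S, ∀ a ∈ A, T a s ↔ a ∈ B) :
    Extendable T ↑(F ∪ A) ∧
      ∃ I' : Set ℕ, MinimalInterval T (F ∪ A) I' ∧ I' ⊆ cutInterval T F C ∧ I'.Infinite := by
  refine ⟨⟨↑F ∪ (↑A ∪ S), hS.mono (subset_union_right.trans subset_union_right),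
    hF.union_of_subset_cutInterval hT hAS_trans (union_subset hAI hSI), ?_⟩,
    cutInterval T (F ∪ A) (C ∪ B),
    minimalInterval_iff.2 ⟨_, hC.union hT hAI hS.nonempty hAS_trans hBA hB, rfl⟩,
    cutInterval_union_subset (Finset.disjoint_left.2 fun f hf hfB => (hAI (hBA hfB)).1 hf),
    hS.mono (subset_cutInterval_union hT hF hC.1 hAI hSI hAS hAS_trans hBA hB)⟩
  rw [Finset.coe_union]
  exact union_subset_union_right _ subset_union_left

end Cut

/-- Partition lemma: if `I` is an infinite minimal interval of a finite transitive
set `F` and `J ⊆ I` is finite with `F ∪ J` transitive, then `J` can be partitioned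
into `P` and `Q` so that `F ∪ P` and `F ∪ Q` are both extendable and both have an
infinite minimal interval contained in `I`. -/
theorem partition_lemma (T : ℕ → ℕ → Prop) (hT : IsTournament T)
    (F : Finset ℕ) (hF : TransitiveFor T ↑F)
    (I : Set ℕ) (hI : MinimalInterval T F I) (hIinf : I.Infinite)
    (J : Finset ℕ) (hJI : ↑J ⊆ I) (hFJ : TransitiveFor T ↑(F ∪ J)) :
    ∃ P Q : Finset ℕ, P ∪ Q = J ∧ Disjoint P Q ∧
      Extendable T ↑(F ∪ P) ∧ Extendable T ↑(F ∪ Q) ∧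
      (∃ I' : Set ℕ, MinimalInterval T (F ∪ P) I' ∧ I' ⊆ I ∧ I'.Infinite) ∧
      (∃ I' : Set ℕ, MinimalInterval T (F ∪ Q) I' ∧ I' ⊆ I ∧ I'.Infinite) := by
  obtain ⟨C, hC, rfl⟩ := minimalInterval_iff.1 hI
  obtain ⟨D, hDJ, hD⟩ := (hIinf.sdiff J.finite_toSet).exists_infinite_setOf_forall_iff T J
  obtain ⟨S, hSD, hS, hS_trans⟩ := hT.exists_infinite_transitiveFor_subset hD
  have hSI : S ⊆ cutInterval T F C := fun s hs => (hSD hs).1.1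
  have hSJ (K : Finset ℕ) (hKJ : K ⊆ J) : Disjoint (↑K) S :=
    disjoint_right.2 fun s hs hsK => (hSD hs).1.2 (hKJ hsK)
  have hJ (K : Finset ℕ) (hKJ : K ⊆ J) : ↑K ⊆ cutInterval T F C ∧ TransitiveFor T ↑K :=
    ⟨hJI.trans' (Finset.coe_subset.2 hKJ),
      hFJ.mono (Finset.coe_subset.2 (hKJ.trans Finset.subset_union_right))⟩
  have hpattern : ∀ s ∈ S, ∀ j ∈ J, T j s ↔ j ∈ D := fun s hs => (hSD hs).2
  have hD_below : ∀ d ∈ D, ∀ s ∈ S, T d s := fun d hd s hs => (hpattern s hs d (hDJ hd)).2 hd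
  have hD_above : ∀ s ∈ S, ∀ q ∈ J \ D, T s q := fun s hs q hq =>
    have ⟨hqJ, hqD⟩ := Finset.mem_sdiff.1 hq
    hT.of_not (fun h => (hSD hs).1.2 (h ▸ hqJ)) (mt (hpattern s hs q hqJ).1 hqD)
  have hP := exists_infinite_minimalInterval_union hT hF hC (hJ D hDJ).1 hSI (hSJ D hDJ) hS
    ((hJ D hDJ).2.union hT hS_trans hD_below) subset_rfl
    fun s hs d hd => iff_of_true (hD_below d hd s hs) hd
  have hQ := exists_infinite_minimalInterval_union (B := ∅) hT hF hC
    (hJ _ Finset.sdiff_subset).1 hSI (hSJ _ Finset.sdiff_subset) hS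
    (union_comm S _ ▸ hS_trans.union hT (hJ _ Finset.sdiff_subset).2 hD_above)
    (Finset.empty_subset _)
    fun s hs q hq => iff_of_false (hT.asymm (hD_above s hs q hq)) (Finset.notMem_empty q)
  exact ⟨D, J \ D, Finset.union_sdiff_of_subset hDJ, Finset.disjoint_sdiff, hP.1, hQ.1, hP.2, hQ.2⟩
end

section
/- Let s : ℕ → ℕ be strictly increasing and let G be a collection of finite subsets of ℕ closed under subsets (if P ∈ G and P' ⊆ P then P' ∈ G). Suppose that for every n there is a partition {s(0), s(1), …, s(n-1)} = P ∪ Q with P ∩ Q = ∅, P ∈ G and Q ∈ G. Then there is an infinite set S' ⊆ range(s) such that every finite subset of S' belongs to G. -/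
/-!
Refine `atTop` to an ultrafilter `U` on the indices `n` and colour each `x ∈ range s` by the
piece, `P n` or `Q n`, that contains it for `U`-almost every `n`. Since `U` is an ultrafilter,
every `x` gets a colour, so one colour class is infinite; and a finite set `F` of one colour lies,
for `U`-almost every `n`, inside that piece of the `n`-th partition, hence belongs to `G`.
-/

open Filter

variable {α ι : Type*}

theorem IsLowerSet.finset_mem_of_forall_eventually_mem {G : Set (Finset α)} (hG : IsLowerSet G)
    {l : Filter ι} [l.NeBot] {P : ι → Finset α} (hP : ∀ i, P i ∈ G) {F : Finset α}
    (hF : ∀ x ∈ F, ∀ᶠ i in l, x ∈ P i) : F ∈ G := by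
  obtain ⟨i, hFi⟩ := ((eventually_all_finset F).2 hF).exists
  exact hG (show F ⊆ P i from hFi) (hP i)

theorem IsLowerSet.exists_infinite_subset_of_eventually_mem_or {G : Set (Finset α)}
    (hG : IsLowerSet G) {l : Filter ι} [l.NeBot] {P Q : ι → Finset α} (hP : ∀ i, P i ∈ G)
    (hQ : ∀ i, Q i ∈ G) {S : Set α} (hS : S.Infinite)
    (hPQ : ∀ x ∈ S, ∀ᶠ i in l, x ∈ P i ∨ x ∈ Q i) :
    ∃ S' ⊆ S, S'.Infinite ∧ ∀ F : Finset α, ↑F ⊆ S' → F ∈ G := by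
  set U := Ultrafilter.of l
  set SP := {x ∈ S | ∀ᶠ i in U, x ∈ P i}
  set SQ := {x ∈ S | ∀ᶠ i in U, x ∈ Q i}
  have hcover : S ⊆ SP ∪ SQ := fun x hx => by
    rcases Ultrafilter.eventually_or.1 (Ultrafilter.of_le l (hPQ x hx)) with hxP | hxQ
    exacts [Or.inl ⟨hx, hxP⟩, Or.inr ⟨hx, hxQ⟩]
  rcases Set.infinite_union.1 (hS.mono hcover) with hSP | hSQ
  · exact ⟨SP, Set.sep_subset _ _, hSP, fun F hF =>
      hG.finset_mem_of_forall_eventually_mem hP fun x hx => (hF hx).2⟩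
  · exact ⟨SQ, Set.sep_subset _ _, hSQ, fun F hF =>
      hG.finset_mem_of_forall_eventually_mem hQ fun x hx => (hF hx).2⟩

theorem eventually_mem_image_range_atTop (s : ℕ → α) [DecidableEq α] {x : α}
    (hx : x ∈ Set.range s) : ∀ᶠ n in atTop, x ∈ (Finset.range n).image s := by
  obtain ⟨i, rfl⟩ := hx
  filter_upwards [eventually_gt_atTop i] with n hn
  exact Finset.mem_image_of_mem s (Finset.mem_range.2 hn)

/-- König's lemma core of the nonemptiness of the restricted solution class: if every
initial segment of the range of `s` admits a partition into two pieces from a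
subset-closed collection `G` of finite sets, then some infinite subset of the range
of `s` has all its finite subsets in `G`. -/
theorem infinite_subset_with_finite_subsets_in_G
    (s : ℕ → ℕ) (hs : StrictMono s) (G : Set (Finset ℕ))
    (hG : ∀ P ∈ G, ∀ P' ⊆ P, P' ∈ G)
    (h : ∀ n : ℕ, ∃ P Q : Finset ℕ,
      P ∪ Q = (Finset.range n).image s ∧ Disjoint P Q ∧ P ∈ G ∧ Q ∈ G) :
    ∃ S' : Set ℕ, S'.Infinite ∧ S' ⊆ Set.range s ∧
      ∀ F : Finset ℕ, ↑F ⊆ S' → F ∈ G := by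
  choose P Q hPQ _ hPG hQG using h
  have hGlower : IsLowerSet G := fun A B hBA hA => hG A hA B hBA
  obtain ⟨S', hS's, hS'inf, hS'G⟩ :=
    hGlower.exists_infinite_subset_of_eventually_mem_or (l := atTop) hPG hQG
      (Set.infinite_range_of_injective hs.injective) fun x hx => by
        simpa only [← Finset.mem_union, hPQ] using eventually_mem_image_range_atTop s hx
  exact ⟨S', hS'inf, hS's, hS'G⟩
end

section
/- Let S and S' be infinite families of finite subsets of ℕ with S' ≤ S. Then every infinite set coded by S' is contained in an infinite set coded by S. -/
/-- The maximum of all elements of all members of `S n`. -/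
def famMax (S : ℕ → Finset (Finset ℕ)) (n : ℕ) : ℕ :=
  (S n).sup fun E => E.sup id

/-- `S` is a family of finite subsets of ℕ: every member of `S (n+1)` properly
extends a member of `S n` by elements larger than everything appearing in `S n`. -/
def IsFamily (S : ℕ → Finset (Finset ℕ)) : Prop :=
  ∀ n, ∀ E ∈ S (n + 1), ∃ E' ∈ S n, E' ⊂ E ∧ ∀ x ∈ E \ E', famMax S n < x

/-- The family `S` is infinite: every level is nonempty. -/
def InfiniteFamily (S : ℕ → Finset (Finset ℕ)) : Prop :=
  ∀ n, (S n).Nonempty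

/-- `E` at level `n+1` is a successor of `E'` at level `n`. -/
def IsSucc (S : ℕ → Finset (Finset ℕ)) (n : ℕ) (E' E : Finset ℕ) : Prop :=
  E' ∈ S n ∧ E ∈ S (n + 1) ∧ E' ⊆ E ∧ ∀ x ∈ E \ E', famMax S n < x

/-- `U` is coded by the family `S`: `U` is the union of an infinite path through `S`
viewed as a finitely branching tree. -/
def CodedBy (S : ℕ → Finset (Finset ℕ)) (U : Set ℕ) : Prop :=
  ∃ E : ℕ → Finset ℕ, (∀ n, E n ∈ S n) ∧ (∀ n, IsSucc S n (E n) (E (n + 1))) ∧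
    U = ⋃ n, ↑(E n)

/-- `S' ≤ S`: every level of `S'` is covered by some level of `S`. -/
def FamilyLE (S' S : ℕ → Finset (Finset ℕ)) : Prop :=
  ∀ n, ∃ m, ∀ E' ∈ S' n, ∃ E ∈ S m, E' ⊆ E

/-!
Every member of `S (n + 1)` is obtained from its predecessor in `S n` by adding elements above
`famMax S n`, so that predecessor is its truncation at `famMax S n`; hence truncation at
`famMax S i` maps `S j` to `S i` for `i ≤ j`, and the levels of `S` form an inverse system of
finite sets. Call a member of `S k` *`U`-covering* if it contains every element of `U` up to
`famMax S k`. Covering members exist at every level: an initial segment of `U` reaching beyond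
`famMax S k` lies in one set of the path of `S'` coding `U`, hence in some member of some level
`S m`, and its truncation to level `k` is covering. Truncations of covering members are covering,
so Kőnig's lemma yields a compatible sequence of covering members, i.e. a path through `S`,
whose union contains `U` because `famMax S` is strictly increasing.
-/

variable {S : ℕ → Finset (Finset ℕ)}

lemma Finset.filter_filter_le_of_le {α : Type*} [Preorder α] [DecidableLE α] {a b : α}
    (hab : a ≤ b) (E : Finset α) :
    (E.filter (· ≤ b)).filter (· ≤ a) = E.filter (· ≤ a) := by
  ext x
  simp only [Finset.mem_filter]
  constructor
  · exact fun ⟨⟨hx, _⟩, hxa⟩ => ⟨hx, hxa⟩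
  · exact fun ⟨hx, hxa⟩ => ⟨⟨hx, hxa.trans hab⟩, hxa⟩

lemma le_famMax {n : ℕ} {E : Finset ℕ} (hE : E ∈ S n) {x : ℕ} (hx : x ∈ E) : x ≤ famMax S n :=
  (Finset.le_sup (f := id) hx).trans (Finset.le_sup (f := fun E => E.sup id) hE)

lemma filter_le_famMax_eq_self {n : ℕ} {E : Finset ℕ} (hE : E ∈ S n) :
    E.filter (· ≤ famMax S n) = E :=
  Finset.filter_true_of_mem fun _ hx => le_famMax hE hx

lemma isSucc_filter_le_famMax {n : ℕ} {E : Finset ℕ}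
    (hE' : E.filter (· ≤ famMax S n) ∈ S n) (hE : E ∈ S (n + 1)) :
    IsSucc S n (E.filter (· ≤ famMax S n)) E := by
  refine ⟨hE', hE, Finset.filter_subset _ _, fun x hx => ?_⟩
  obtain ⟨hxE, hx⟩ := Finset.mem_sdiff.1 hx
  exact not_le.1 fun hxn => hx (Finset.mem_filter.2 ⟨hxE, hxn⟩)

namespace IsFamily

lemma filter_le_famMax_mem (hS : IsFamily S) {n : ℕ} {E : Finset ℕ} (hE : E ∈ S (n + 1)) :
    E.filter (· ≤ famMax S n) ∈ S n := by
  obtain ⟨E', hE', hsub, hgt⟩ := hS n E hE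
  convert hE' using 1
  ext x
  rw [Finset.mem_filter]
  refine ⟨fun ⟨hxE, hx⟩ => ?_, fun hx => ⟨hsub.subset hx, le_famMax hE' hx⟩⟩
  by_contra hxE'
  exact (hgt x (Finset.mem_sdiff.2 ⟨hxE, hxE'⟩)).not_ge hx

lemma famMax_lt_succ (hS : IsFamily S) {n : ℕ} (hne : (S (n + 1)).Nonempty) :
    famMax S n < famMax S (n + 1) := by
  obtain ⟨E, hE⟩ := hne
  obtain ⟨E', -, hsub, hgt⟩ := hS n E hE
  obtain ⟨x, hxE, hxE'⟩ := Finset.exists_of_ssubset hsub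
  exact (hgt x (Finset.mem_sdiff.2 ⟨hxE, hxE'⟩)).trans_le (le_famMax hE hxE)

lemma strictMono_famMax (hS : IsFamily S) (hSinf : InfiniteFamily S) : StrictMono (famMax S) :=
  strictMono_nat_of_lt_succ fun n => hS.famMax_lt_succ (hSinf (n + 1))

lemma filter_le_famMax_mem_of_le (hS : IsFamily S) (hSinf : InfiniteFamily S) {i j : ℕ}
    (hij : i ≤ j) {E : Finset ℕ} (hE : E ∈ S j) : E.filter (· ≤ famMax S i) ∈ S i := by
  induction j, hij using Nat.le_induction generalizing E with
  | base => rwa [filter_le_famMax_eq_self hE]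
  | succ j hij ih =>
    have h := ih (hS.filter_le_famMax_mem hE)
    rwa [Finset.filter_filter_le_of_le ((hS.strictMono_famMax hSinf).monotone hij)] at h

end IsFamily

lemma CodedBy.exists_mem_superset_of_finite {U : Set ℕ} (hU : CodedBy S U) {s : Set ℕ}
    (hs : s.Finite) (hsU : s ⊆ U) : ∃ n, ∃ E ∈ S n, s ⊆ E := by
  obtain ⟨E, hE, hsucc, rfl⟩ := hU
  have hmono : Monotone fun n => (E n : Set ℕ) :=
    monotone_nat_of_le_succ fun n => Finset.coe_subset.2 (hsucc n).2.2.1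
  obtain ⟨n, hn⟩ := hmono.directed_le.exists_mem_subset_of_finset_subset_biUnion
    (s := hs.toFinset) (by simpa using hsU)
  exact ⟨n, E n, hE n, by simpa using hn⟩

def coveringLevel (S : ℕ → Finset (Finset ℕ)) (U : Set ℕ) (k : ℕ) : Set (Finset ℕ) :=
  {F | F ∈ S k ∧ ∀ x ∈ U, x ≤ famMax S k → x ∈ F}

section coveringLevel

variable {U : Set ℕ}

lemma coveringLevel_finite (k : ℕ) : (coveringLevel S U k).Finite :=
  (S k).finite_toSet.subset fun _ hF => hF.1

lemma filter_le_famMax_mem_coveringLevel (hS : IsFamily S) (hSinf : InfiniteFamily S)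
    {i j : ℕ} (hij : i ≤ j) {F : Finset ℕ} (hF : F ∈ coveringLevel S U j) :
    F.filter (· ≤ famMax S i) ∈ coveringLevel S U i :=
  ⟨hS.filter_le_famMax_mem_of_le hSinf hij hF.1, fun x hxU hx => Finset.mem_filter.2
    ⟨hF.2 x hxU (hx.trans ((hS.strictMono_famMax hSinf).monotone hij)), hx⟩⟩

lemma coveringLevel_nonempty {S' : ℕ → Finset (Finset ℕ)} (hS : IsFamily S)
    (hSinf : InfiniteFamily S) (hle : FamilyLE S' S) (hU : CodedBy S' U) (hUinf : U.Infinite)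
    (k : ℕ) : (coveringLevel S U k).Nonempty := by
  obtain ⟨u, huU, hku⟩ := hUinf.exists_gt (famMax S k)
  obtain ⟨n, E', hE', hsub⟩ :=
    hU.exists_mem_superset_of_finite ((Set.finite_Iic u).inter_of_right U) Set.inter_subset_left
  obtain ⟨m, hm⟩ := hle n
  obtain ⟨F, hF, hE'F⟩ := hm E' hE'
  have hUF : ∀ x ∈ U, x ≤ u → x ∈ F := fun x hx hxu => hE'F (hsub ⟨hx, hxu⟩)
  have hkm : k ≤ m := by
    by_contra! hmk
    have hum := le_famMax hF (hUF u huU le_rfl)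
    have hmk' := (hS.strictMono_famMax hSinf).monotone hmk.le
    omega
  exact ⟨F.filter (· ≤ famMax S k), hS.filter_le_famMax_mem_of_le hSinf hkm hF,
    fun x hx hxk => Finset.mem_filter.2 ⟨hUF x hx (hxk.trans hku.le), hxk⟩⟩

lemma exists_isSucc_seq_mem_coveringLevel (hS : IsFamily S) (hSinf : InfiniteFamily S)
    (hne : ∀ k, (coveringLevel S U k).Nonempty) :
    ∃ E : ℕ → Finset ℕ, (∀ n, E n ∈ coveringLevel S U n) ∧ ∀ n, IsSucc S n (E n) (E (n + 1)) := by
  have (k : ℕ) : Nonempty (coveringLevel S U k) := (hne k).to_subtype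
  have (k : ℕ) : Finite (coveringLevel S U k) := (coveringLevel_finite k).to_subtype
  obtain ⟨f, hf⟩ := exists_seq_forall_proj_of_forall_finite (α := fun k => coveringLevel S U k)
    (fun {i _} hij F => ⟨F.1.filter (· ≤ famMax S i),
      filter_le_famMax_mem_coveringLevel hS hSinf hij F.2⟩)
    (fun _ F => Subtype.ext (filter_le_famMax_eq_self F.2.1))
    (fun _ _ _ hij _ F => Subtype.ext
      (Finset.filter_filter_le_of_le ((hS.strictMono_famMax hSinf).monotone hij) F.1))
    (fun _ _ => Set.toFinite _)
  refine ⟨fun n => f n, fun n => (f n).2, fun n => ?_⟩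
  have htrunc : (f (n + 1)).1.filter (· ≤ famMax S n) = f n :=
    congrArg Subtype.val (hf (Nat.le_succ n))
  show IsSucc S n (f n).1 (f (n + 1)).1
  rw [← htrunc]
  exact isSucc_filter_le_famMax (htrunc ▸ (f n).2.1) (f (n + 1)).2.1

end coveringLevel

theorem codedBy_le_subset_general (S S' : ℕ → Finset (Finset ℕ))
    (hS : IsFamily S)
    (hSinf : InfiniteFamily S)
    (hle : FamilyLE S' S) (U : Set ℕ) (hU : CodedBy S' U) (hUinf : U.Infinite) :
    ∃ V : Set ℕ, CodedBy S V ∧ V.Infinite ∧ U ⊆ V := by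
  obtain ⟨E, hE, hsucc⟩ := exists_isSucc_seq_mem_coveringLevel hS hSinf
    (coveringLevel_nonempty hS hSinf hle hU hUinf)
  have hUE : U ⊆ ⋃ n, (E n : Set ℕ) := fun x hx =>
    Set.mem_iUnion.2 ⟨x, (hE x).2 x hx (hS.strictMono_famMax hSinf).le_apply⟩
  exact ⟨_, ⟨E, fun n => (hE n).1, hsucc, rfl⟩, hUinf.mono hUE, hUE⟩

/-- If `S' ≤ S` are infinite families, every infinite set coded by `S'` is contained
in an infinite set coded by `S`. -/
theorem codedBy_le_subset (S S' : ℕ → Finset (Finset ℕ))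
    (hS : IsFamily S) (hS' : IsFamily S')
    (hSinf : InfiniteFamily S) (hS'inf : InfiniteFamily S')
    (hle : FamilyLE S' S) (U : Set ℕ) (hU : CodedBy S' U) (hUinf : U.Infinite) :
    ∃ V : Set ℕ, CodedBy S V ∧ V.Infinite ∧ U ⊆ V :=
  codedBy_le_subset_general S S' hS hSinf hle U hU hUinf
end

section
/- Let S be an infinite family of finite subsets of ℕ and let g : ℕ → Bool be any function (a pointwise partition of S). Then there exist i ∈ Bool and an infinite family S' such that for every n there is m with the property that for every E' ∈ S'(n), the function g is constantly equal to i on E' and there is E ∈ S(m) with E' ⊆ {x ∈ E | g(x) = i} (i.e., S' ≤ S_i where S_i is generated from S by the partition g). -/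
/- ### Auxiliary development: a path through the family (König's lemma) -/

open Classical in
/-- A chosen predecessor of `F` (assuming `F ∈ S (n+1)`). -/
noncomputable def predF (S : ℕ → Finset (Finset ℕ)) (hS : IsFamily S)
    (n : ℕ) (F : Finset ℕ) : Finset ℕ :=
  if h : F ∈ S (n + 1) then (hS n F h).choose else ∅

lemma predF_spec (S : ℕ → Finset (Finset ℕ)) (hS : IsFamily S)
    (n : ℕ) {F : Finset ℕ} (h : F ∈ S (n + 1)) :
    predF S hS n F ∈ S n ∧ predF S hS n F ⊂ F ∧
      ∀ x ∈ F \ predF S hS n F, famMax S n < x := by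
  unfold predF
  rw [dif_pos h]
  obtain ⟨h1, h2, h3⟩ := (hS n F h).choose_spec
  exact ⟨h1, h2, h3⟩

/-- Iterated predecessor: `ancF S hS n k F` is the `k`-fold predecessor of `F`,
meaningful when `F ∈ S (n + k)`. -/
noncomputable def ancF (S : ℕ → Finset (Finset ℕ)) (hS : IsFamily S) :
    ℕ → ℕ → Finset ℕ → Finset ℕ
  | _, 0, F => F
  | n, k + 1, F => predF S hS n (ancF S hS (n + 1) k F)

lemma ancF_mem (S : ℕ → Finset (Finset ℕ)) (hS : IsFamily S) (k : ℕ) :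
    ∀ (n : ℕ) (F : Finset ℕ), F ∈ S (n + k) → ancF S hS n k F ∈ S n := by
  induction k with
  | zero => intro n F h; exact h
  | succ k ih =>
    intro n F h
    have h' : F ∈ S ((n + 1) + k) := by rwa [show (n + 1) + k = n + (k + 1) by omega]
    have hm := ih (n + 1) F h'
    show predF S hS n (ancF S hS (n + 1) k F) ∈ S n
    exact (predF_spec S hS n hm).1

lemma ancF_succ (S : ℕ → Finset (Finset ℕ)) (hS : IsFamily S) (j : ℕ) :
    ∀ (n : ℕ) (F : Finset ℕ),
      ancF S hS n (j + 1) F = ancF S hS n j (predF S hS (n + j) F) := by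
  induction j with
  | zero => intro n F; rfl
  | succ j ih =>
    intro n F
    show predF S hS n (ancF S hS (n + 1) (j + 1) F)
       = predF S hS n (ancF S hS (n + 1) j (predF S hS (n + (j + 1)) F))
    rw [ih (n + 1) F, show (n + 1) + j = n + (j + 1) by omega]

lemma ancF_comp (S : ℕ → Finset (Finset ℕ)) (hS : IsFamily S) (j : ℕ) :
    ∀ (k n : ℕ) (F : Finset ℕ),
      ancF S hS n (k + j) F = ancF S hS n k (ancF S hS (n + k) j F) := by
  induction j with
  | zero => intro k n F; rfl
  | succ j ih =>
    intro k n F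
    rw [show k + (j + 1) = (k + j) + 1 by omega, ancF_succ S hS (k + j) n F,
        show n + (k + j) = (n + k) + j by omega, ih k n (predF S hS ((n + k) + j) F),
        ← ancF_succ S hS j (n + k) F]

/-- Pigeonhole: a sequence in a finite set has a value attained arbitrarily late. -/
lemma exists_freq (T : Finset (Finset ℕ)) (f : ℕ → Finset ℕ) (hf : ∀ k, f k ∈ T) :
    ∃ E ∈ T, ∀ k, ∃ j, k ≤ j ∧ f j = E := by
  obtain ⟨b, hb⟩ :=
    Finite.exists_infinite_fiber (fun k => (⟨f k, hf k⟩ : {E // E ∈ T}))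
  refine ⟨b.1, b.2, fun k => ?_⟩
  have hb' : ((fun k => (⟨f k, hf k⟩ : {E // E ∈ T})) ⁻¹' {b}).Infinite :=
    Set.infinite_coe_iff.mp hb
  obtain ⟨j, hj1, hj2⟩ := hb'.exists_gt k
  refine ⟨j, le_of_lt hj2, ?_⟩
  have : (⟨f j, hf j⟩ : {E // E ∈ T}) = b := hj1
  exact congrArg Subtype.val this

/-- `E` is at level `n` and has descendants at every deeper level. -/
def GoodF (S : ℕ → Finset (Finset ℕ)) (hS : IsFamily S) (n : ℕ) (E : Finset ℕ) : Prop :=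
  ∀ k, ∃ F ∈ S (n + k), ancF S hS n k F = E

lemma GoodF_mem (S : ℕ → Finset (Finset ℕ)) (hS : IsFamily S) {n : ℕ} {E : Finset ℕ}
    (h : GoodF S hS n E) : E ∈ S n := by
  obtain ⟨F, hF, hanc⟩ := h 0
  rw [show ancF S hS n 0 F = F from rfl] at hanc
  subst hanc
  simpa using hF

lemma exists_good_zero (S : ℕ → Finset (Finset ℕ)) (hS : IsFamily S)
    (hSinf : InfiniteFamily S) : ∃ E, GoodF S hS 0 E := by
  classical
  choose F hF using hSinf
  obtain ⟨E, _hE, hfreq⟩ := exists_freq (S 0) (fun k => ancF S hS 0 k (F k))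
    (fun k => ancF_mem S hS k 0 (F k) (by simpa using hF k))
  refine ⟨E, fun k => ?_⟩
  obtain ⟨j, hkj, hj⟩ := hfreq k
  have hjeq : j = k + (j - k) := by omega
  rw [hjeq] at hj
  rw [ancF_comp S hS (j - k) k 0 (F (k + (j - k)))] at hj
  refine ⟨ancF S hS (0 + k) (j - k) (F (k + (j - k))), ?_, ?_⟩
  · exact ancF_mem S hS (j - k) (0 + k) _ (by rw [show (0 + k) + (j - k) = k + (j - k) by omega]; exact hF _)
  · exact hj
  -- note the goal is `∃ F ∈ S (0 + k), ancF S hS 0 k F = E`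

lemma good_step (S : ℕ → Finset (Finset ℕ)) (hS : IsFamily S) (n : ℕ) (E : Finset ℕ)
    (hE : GoodF S hS n E) :
    ∃ E', GoodF S hS (n + 1) E' ∧ predF S hS n E' = E := by
  classical
  choose F hFmem hFanc using hE
  set f : ℕ → Finset ℕ := fun k => ancF S hS (n + 1) k (F (k + 1)) with hf
  have hfmem : ∀ k, f k ∈ S (n + 1) := by
    intro k
    exact ancF_mem S hS k (n + 1) (F (k + 1))
      (by rw [show (n + 1) + k = n + (k + 1) by omega]; exact hFmem (k + 1))
  obtain ⟨E', hE'mem, hfreq⟩ := exists_freq (S (n + 1)) f hfmem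
  have hpred : predF S hS n E' = E := by
    obtain ⟨j, _, hj⟩ := hfreq 0
    have := hFanc (j + 1)
    rw [show ancF S hS n (j + 1) (F (j + 1))
          = predF S hS n (ancF S hS (n + 1) j (F (j + 1))) from rfl] at this
    rw [show ancF S hS (n + 1) j (F (j + 1)) = f j from rfl, hj] at this
    exact this
  refine ⟨E', fun k => ?_, hpred⟩
  obtain ⟨j, hkj, hj⟩ := hfreq k
  rw [hf] at hj
  simp only at hj
  have hjeq : j = k + (j - k) := by omega
  rw [hjeq] at hj
  rw [ancF_comp S hS (j - k) k (n + 1) (F (k + (j - k) + 1))] at hj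
  refine ⟨ancF S hS ((n + 1) + k) (j - k) (F (k + (j - k) + 1)), ?_, hj⟩
  exact ancF_mem S hS (j - k) ((n + 1) + k) _
    (by rw [show ((n + 1) + k) + (j - k) = n + (k + (j - k) + 1) by omega]
        exact hFmem (k + (j - k) + 1))

/-- König's lemma for families: an infinite family has an infinite path. -/
lemma exists_path (S : ℕ → Finset (Finset ℕ)) (hS : IsFamily S)
    (hSinf : InfiniteFamily S) :
    ∃ P : ℕ → Finset ℕ, (∀ n, P n ∈ S n) ∧
      ∀ n, P n ⊂ P (n + 1) ∧ ∀ x ∈ P (n + 1) \ P n, famMax S n < x := by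
  classical
  let base : {E : Finset ℕ // GoodF S hS 0 E} :=
    ⟨(exists_good_zero S hS hSinf).choose, (exists_good_zero S hS hSinf).choose_spec⟩
  let step : ∀ n, {E : Finset ℕ // GoodF S hS n E} →
      {E : Finset ℕ // GoodF S hS (n + 1) E} := fun n p =>
    ⟨(good_step S hS n p.1 p.2).choose, (good_step S hS n p.1 p.2).choose_spec.1⟩
  let Q : (n : ℕ) → {E : Finset ℕ // GoodF S hS n E} := fun n => Nat.rec base step n
  have hQsucc : ∀ n, Q (n + 1) = step n (Q n) := fun n => rfl
  have hQpred : ∀ n, predF S hS n (Q (n + 1)).1 = (Q n).1 := by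
    intro n
    exact (good_step S hS n (Q n).1 (Q n).2).choose_spec.2
  refine ⟨fun n => (Q n).1, fun n => GoodF_mem S hS (Q n).2, fun n => ?_⟩
  have hmem : (Q (n + 1)).1 ∈ S (n + 1) := GoodF_mem S hS (Q (n + 1)).2
  obtain ⟨_, h2, h3⟩ := predF_spec S hS n hmem
  rw [hQpred n] at h2 h3
  exact ⟨h2, h3⟩

/-- Pointwise partition lemma for families: given an infinite family `S` and a
two-coloring `g` of ℕ, there is a color `i` and an infinite family `S'` with
`S' ≤ S_i`, where `S_i` is generated from `S` by keeping only the `g`-color-`i`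
elements of each member. -/
theorem family_pointwise_partition (S : ℕ → Finset (Finset ℕ))
    (hS : IsFamily S) (hSinf : InfiniteFamily S) (g : ℕ → Bool) :
    ∃ (i : Bool) (S' : ℕ → Finset (Finset ℕ)), IsFamily S' ∧ InfiniteFamily S' ∧
      ∀ n, ∃ m, ∀ E' ∈ S' n, (∀ x ∈ E', g x = i) ∧
        ∃ E ∈ S m, E' ⊆ E.filter fun x => g x = i := by
  classical
  obtain ⟨P, hPmem, hPstep⟩ := exists_path S hS hSinf
  have hmono : ∀ {k m : ℕ}, k ≤ m → P k ⊆ P m := by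
    intro k m h
    induction h with
    | refl => exact subset_rfl
    | step h ih => exact ih.trans (hPstep _).1.subset
  have hsup : ∀ n, (P n).sup id ≤ famMax S n := fun n =>
    Finset.le_sup (f := fun E => E.sup id) (hPmem n)
  have hgap : ∀ m k, k ≤ m → ∀ x ∈ P m, x ∉ P k → (P k).sup id < x := by
    intro m
    induction m with
    | zero =>
      intro k hk x hx hxk
      interval_cases k
      exact absurd hx hxk
    | succ m ih =>
      intro k hk x hx hxk
      rcases Nat.lt_or_ge k (m + 1) with h | h
      · have hk' : k ≤ m := by omega
        by_cases hxm : x ∈ P m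
        · exact ih k hk' x hxm hxk
        · have hx' := (hPstep m).2 x (Finset.mem_sdiff.mpr ⟨hx, hxm⟩)
          have hle : (P k).sup id ≤ famMax S m :=
            le_trans (Finset.sup_mono (hmono hk')) (hsup m)
          omega
      · have : k = m + 1 := by omega
        subst this
        exact absurd hx hxk
  -- pick witnesses of strict growth
  choose x hx1 hx2 using fun n => Finset.exists_of_ssubset (hPstep n).1
  -- color pigeonhole
  obtain ⟨i, hi⟩ := Finite.exists_infinite_fiber (fun n => g (x n))
  have hi' : {n | g (x n) = i}.Infinite := Set.infinite_coe_iff.mp hi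
  set p : ℕ → Prop := fun n => g (x n) = i with hp
  set φ : ℕ → ℕ := Nat.nth p with hφ
  have hsetp : (setOf p).Infinite := hi'
  have hφcol : ∀ n, g (x (φ n)) = i := fun n => Nat.nth_mem_of_infinite hsetp n
  have hφlt : ∀ n, φ n < φ (n + 1) := fun n =>
    (Nat.nth_lt_nth hsetp).mpr (Nat.lt_succ_self n)
  -- the new family
  set A : ℕ → Finset ℕ := fun n => (P (φ n + 1)).filter (fun y => g y = i) with hA
  have hAsub : ∀ n, A n ⊆ A (n + 1) := by
    intro n
    exact Finset.filter_subset_filter _ (hmono (by have := hφlt n; omega))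
  have hAx : ∀ n, x (φ (n + 1)) ∈ A (n + 1) := by
    intro n
    exact Finset.mem_filter.mpr ⟨hx1 (φ (n + 1)), hφcol (n + 1)⟩
  have hAxn : ∀ n, x (φ (n + 1)) ∉ A n := by
    intro n hmem
    have : x (φ (n + 1)) ∈ P (φ n + 1) := (Finset.mem_filter.mp hmem).1
    have : x (φ (n + 1)) ∈ P (φ (n + 1)) := hmono (by have := hφlt n; omega) this
    exact hx2 (φ (n + 1)) this
  have hAss : ∀ n, A n ⊂ A (n + 1) := fun n =>
    Finset.ssubset_iff_of_subset (hAsub n) |>.mpr ⟨_, hAx n, hAxn n⟩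
  refine ⟨i, fun n => {A n}, ?_, ?_, ?_⟩
  · -- IsFamily
    intro n E hE
    rw [Finset.mem_singleton] at hE
    subst hE
    refine ⟨A n, Finset.mem_singleton_self _, hAss n, ?_⟩
    intro y hy
    rw [Finset.mem_sdiff] at hy
    obtain ⟨hy1, hy2⟩ := hy
    have hyP : y ∈ P (φ (n + 1) + 1) := (Finset.mem_filter.mp hy1).1
    have hyc : g y = i := (Finset.mem_filter.mp hy1).2
    have hynP : y ∉ P (φ n + 1) := by
      intro hmem
      exact hy2 (Finset.mem_filter.mpr ⟨hmem, hyc⟩)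
    have hlt : (P (φ n + 1)).sup id < y :=
      hgap (φ (n + 1) + 1) (φ n + 1) (by have := hφlt n; omega) y hyP hynP
    have hle : (A n).sup id ≤ (P (φ n + 1)).sup id :=
      Finset.sup_mono (Finset.filter_subset _ _)
    have : famMax (fun n => {A n}) n = (A n).sup id := by
      simp [famMax]
    omega
  · -- InfiniteFamily
    intro n
    exact ⟨A n, Finset.mem_singleton_self _⟩
  · -- covering
    intro n
    refine ⟨φ n + 1, fun E' hE' => ?_⟩
    rw [Finset.mem_singleton] at hE'
    subst hE'
    refine ⟨fun y hy => (Finset.mem_filter.mp hy).2, P (φ n + 1), hPmem _, ?_⟩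
    exact subset_rfl
end
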